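/- arXiv:1208.2389 — 5 statements merged into one kernel-verified Lean document; each statement's English description precedes it below -/
import Mathlib

section
/- Let 2 ≤ r ≤ k ≤ n be integers. There is a constant C = C(k,r) with the following property: if (μ_G)_G is a consistent random ordering defined on all r-uniform hypergraphs of size at most n, and H is an r-uniform hypergraph of size k, then d_TV(μ_H, ν_H) ≤ C·√(log n / n^{r-1}), where ν_H is the uniform ordering on H. -/
open Finset

/-- The linear orderings of a finite set `V ⊆ ℕ`, represented as the lists
enumerating the elements of `V` exactly once. -/
def Orderings (V : Finset ℕ) : Finset (List ℕ) :=
  (V.sort (· ≤ ·)).permutations.toFinset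

/-- An `r`-uniform hypergraph on a finite vertex set `V ⊆ ℕ`: a set of
`r`-element subsets of `V`.  For `r = 2` this is exactly a finite simple graph. -/
structure FinHypergraph (r : ℕ) where
  verts : Finset ℕ
  edges : Finset (Finset ℕ)
  card_edge : ∀ e ∈ edges, e.card = r
  edge_subset : ∀ e ∈ edges, e ⊆ verts

namespace FinHypergraph

/-- `H` is an induced subhypergraph of `G`. -/
def IsInduced {r : ℕ} (H G : FinHypergraph r) : Prop :=
  H.verts ⊆ G.verts ∧ ∀ e : Finset ℕ, e ⊆ H.verts → (e ∈ H.edges ↔ e ∈ G.edges)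

/-- `φ` is an isomorphism from `G` onto `G'`. -/
def IsIso {r : ℕ} (G G' : FinHypergraph r) (φ : ℕ → ℕ) : Prop :=
  Set.InjOn φ G.verts ∧ G.verts.image φ = G'.verts ∧
    ∀ e : Finset ℕ, e ⊆ G.verts → (e ∈ G.edges ↔ e.image φ ∈ G'.edges)

end FinHypergraph

/-- A consistent random ordering on a class `𝒞` of `r`-uniform hypergraphs:
an isomorphism-invariant assignment, to each hypergraph `G` in the class, of a
probability measure `μ G` on the linear orderings of its vertex set, compatible
with restriction to induced subhypergraphs. -/
structure ConsistentRandomOrdering {r : ℕ} (𝒞 : Set (FinHypergraph r)) where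
  μ : FinHypergraph r → List ℕ → ℝ
  nonneg : ∀ G l, 0 ≤ μ G l
  supported : ∀ G ∈ 𝒞, ∀ l : List ℕ, l ∉ Orderings G.verts → μ G l = 0
  total : ∀ G ∈ 𝒞, ∑ l ∈ Orderings G.verts, μ G l = 1
  iso_invariant : ∀ G ∈ 𝒞, ∀ G' ∈ 𝒞, ∀ φ : ℕ → ℕ, G.IsIso G' φ →
    ∀ l ∈ Orderings G.verts, μ G' (l.map φ) = μ G l
  restriction : ∀ G ∈ 𝒞, ∀ H ∈ 𝒞, H.IsInduced G → ∀ m ∈ Orderings H.verts,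
    μ H m = ∑ l ∈ (Orderings G.verts).filter
      (fun l => l.filter (fun x => decide (x ∈ H.verts)) = m), μ G l

/-!
Let `G` be a uniformly random `r`-uniform hypergraph on `n` vertices. For an ordering `σ` of its
vertices and an ordering `l` of `H`, the number of `k`-sets `S` with `(G[S], σ|S) ≅ (H, l)` as
ordered hypergraphs is a function of the edge set with bounded differences `(n-r).choose (k-r)`.
By McDiarmid's inequality and a union bound over the `n! k!` pairs `(σ, l)`, some `G` has all these
counts within a factor `1 ± ε` of their common mean, where `ε ≍ √(log n / n^(r-1))`. Restriction
and isomorphism invariance of the random ordering show that `μ_H(l)`, times a count that does not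
depend on `l`, is the `μ_G`-average of these counts; hence `μ_H` is `O(ε)`-close to uniform.
-/

open Real
open scoped BigOperators Nat

namespace Finset

variable {β : Type*}

lemma card_filter_powerset_inter_eq [DecidableEq β] {P Q R : Finset β}
    (hPQ : P ⊆ Q) (hQR : Q ⊆ R) : #{T ∈ R.powerset | T ∩ Q = P} = 2 ^ (#R - #Q) := by
  rw [← card_sdiff_of_subset hQR, ← card_powerset]
  refine card_bij' (fun T _ => T \ Q) (fun U _ => U ∪ P) ?_ ?_ ?_ ?_
  · intro T hT
    exact mem_powerset.2 (sdiff_subset_sdiff (mem_powerset.1 (mem_filter.1 hT).1) subset_rfl)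
  · intro U hU
    have hUQ : Disjoint U Q := disjoint_of_subset_left (mem_powerset.1 hU) sdiff_disjoint
    refine mem_filter.2 ⟨mem_powerset.2 (union_subset ((mem_powerset.1 hU).trans sdiff_subset)
      (hPQ.trans hQR)), ?_⟩
    rw [union_inter_distrib_right, disjoint_iff_inter_eq_empty.1 hUQ, inter_eq_left.2 hPQ,
      empty_union]
  · intro T hT
    rw [← (mem_filter.1 hT).2, sdiff_union_inter]
  · intro U hU
    have hUQ : Disjoint U Q := disjoint_of_subset_left (mem_powerset.1 hU) sdiff_disjoint
    rw [union_sdiff_distrib, sdiff_eq_self_of_disjoint hUQ, sdiff_eq_empty_iff_subset.2 hPQ,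
      union_empty]

lemma card_filter_le_card_filter_add_card_filter (s : Finset β) {p q b : β → Prop}
    [DecidablePred p] [DecidablePred q] [DecidablePred b] (h : ∀ x ∈ s, ¬ b x → p x → q x) :
    #{x ∈ s | p x} ≤ #{x ∈ s | q x} + #{x ∈ s | b x} := by
  classical
  calc #{x ∈ s | p x} ≤ #({x ∈ s | p x} \ {x ∈ s | q x}) + #{x ∈ s | q x} :=
        card_le_card_sdiff_add_card
    _ ≤ #{x ∈ s | b x} + #{x ∈ s | q x} := by
        gcongr
        intro x hx
        simp only [mem_sdiff, mem_filter] at hx ⊢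
        exact ⟨hx.1.1, by_contra fun hb => hx.2 ⟨hx.1.1, h x hx.1.1 hb hx.1.2⟩⟩
    _ = #{x ∈ s | q x} + #{x ∈ s | b x} := add_comm _ _

lemma abs_card_filter_sub_card_filter_le (s : Finset β) {p q b : β → Prop}
    [DecidablePred p] [DecidablePred q] [DecidablePred b] (h : ∀ x ∈ s, ¬ b x → (p x ↔ q x)) :
    |(#{x ∈ s | p x} : ℝ) - #{x ∈ s | q x}| ≤ #{x ∈ s | b x} := by
  have hpq : (#{x ∈ s | p x} : ℝ) ≤ #{x ∈ s | q x} + #{x ∈ s | b x} := by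
    exact_mod_cast card_filter_le_card_filter_add_card_filter s fun x hx hb => (h x hx hb).1
  have hqp : (#{x ∈ s | q x} : ℝ) ≤ #{x ∈ s | p x} + #{x ∈ s | b x} := by
    exact_mod_cast card_filter_le_card_filter_add_card_filter s fun x hx hb => (h x hx hb).2
  rw [abs_sub_le_iff]
  constructor <;> linarith

end Finset

section Averages

variable {ι : Type*} {s : Finset ι}

lemma abs_sum_mul_sub_le {w x : ι → ℝ} {M δ : ℝ} (hw : ∀ i ∈ s, 0 ≤ w i)
    (hw₁ : ∑ i ∈ s, w i = 1) (hx : ∀ i ∈ s, |x i - M| ≤ δ) : |∑ i ∈ s, w i * x i - M| ≤ δ :=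
  calc |∑ i ∈ s, w i * x i - M| = |∑ i ∈ s, w i * (x i - M)| := by
        simp_rw [mul_sub, sum_sub_distrib, ← sum_mul, hw₁, one_mul]
    _ ≤ ∑ i ∈ s, |w i * (x i - M)| := abs_sum_le_sum_abs _ _
    _ ≤ ∑ i ∈ s, w i * δ := sum_le_sum fun i hi => by
        rw [abs_mul, abs_of_nonneg (hw i hi)]
        exact mul_le_mul_of_nonneg_left (hx i hi) (hw i hi)
    _ = δ := by rw [← sum_mul, hw₁, one_mul]

lemma half_sum_abs_sub_inv_card_le_one {p : ι → ℝ} (hp₀ : ∀ i ∈ s, 0 ≤ p i)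
    (hp : ∑ i ∈ s, p i = 1) : (1 / 2) * ∑ i ∈ s, |p i - (#s : ℝ)⁻¹| ≤ 1 := by
  have hs : (#s : ℝ) ≠ 0 := by
    simpa using (nonempty_of_sum_ne_zero (hp ▸ one_ne_zero)).card_pos.ne'
  have : ∑ i ∈ s, |p i - (#s : ℝ)⁻¹| ≤ ∑ i ∈ s, (p i + (#s : ℝ)⁻¹) :=
    sum_le_sum fun i hi => (abs_sub _ _).trans (by rw [abs_of_nonneg (hp₀ i hi),
      abs_of_nonneg (by positivity)])
  rw [sum_add_distrib, hp, sum_const, nsmul_eq_mul, mul_inv_cancel₀ hs] at this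
  linarith

lemma half_sum_abs_sub_inv_card_le {p : ι → ℝ} (hp : ∑ i ∈ s, p i = 1) {a M ε : ℝ}
    (hM : 0 < M) (hε : ε ≤ 1 / 2) (h : ∀ i ∈ s, |a * p i - M| ≤ ε * M) :
    (1 / 2) * ∑ i ∈ s, |p i - (#s : ℝ)⁻¹| ≤ 2 * ε := by
  set N : ℝ := (#s : ℝ)
  have hN : 0 < N := by
    simpa [N] using (nonempty_of_sum_ne_zero (hp ▸ one_ne_zero)).card_pos
  have hmean : |a / N - M| ≤ ε * M := by
    have := abs_sum_mul_sub_le (w := fun _ => N⁻¹) (fun _ _ => by positivity)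
      (by rw [sum_const, nsmul_eq_mul, mul_inv_cancel₀ hN.ne']) h
    rwa [← mul_sum, ← mul_sum, hp, mul_one, inv_mul_eq_div] at this
  have ha : M / 2 ≤ a / N := by nlinarith [(abs_le.1 hmean).1]
  have hclose : ∀ i ∈ s, |p i - N⁻¹| ≤ 4 * ε / N := fun i hi => by
    have hdiff : a / N * (N * |p i - N⁻¹|) ≤ 2 * ε * M := by
      have hc : 0 < a / N := by linarith
      rw [show a / N * (N * |p i - N⁻¹|) = |a / N * (N * (p i - N⁻¹))| by
        rw [abs_mul, abs_mul, abs_of_pos hc, abs_of_pos hN]]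
      calc |a / N * (N * (p i - N⁻¹))| = |(a * p i - M) + (M - a / N)| := by
            congr 1
            field_simp
            ring
        _ ≤ ε * M + ε * M := (abs_add_le _ _).trans (add_le_add (h i hi) (by rwa [abs_sub_comm]))
        _ = 2 * ε * M := by ring
    have : M / 2 * (N * |p i - N⁻¹|) ≤ M / 2 * (4 * ε) := by
      nlinarith [mul_le_mul_of_nonneg_right ha (by positivity : 0 ≤ N * |p i - N⁻¹|)]
    rw [le_div_iff₀ hN, mul_comm]
    exact le_of_mul_le_mul_left this (by linarith)
  calc (1 / 2) * ∑ i ∈ s, |p i - N⁻¹| ≤ (1 / 2) * ∑ _i ∈ s, 4 * ε / N := by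
        gcongr with i hi
        exact hclose i hi
    _ = 2 * ε := by
        rw [sum_const, nsmul_eq_mul]
        field_simp
        ring

end Averages

lemma Real.exp_sub_add_exp_add_le (u v : ℝ) :
    exp (u - v) + exp (u + v) ≤ 2 * exp u * exp (v ^ 2 / 2) := by
  have h : exp (u - v) + exp (u + v) = 2 * exp u * cosh v := by
    rw [cosh_eq, sub_eq_add_neg, exp_add, exp_add]
    ring
  rw [h]
  gcongr
  exact cosh_le_exp_half_sq v

namespace Finset

variable {α : Type*} [DecidableEq α]

def HasBoundedDifferences (s : Finset α) (f : Finset α → ℝ) (c : ℝ) : Prop :=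
  ∀ e ∈ s, ∀ T ⊆ s, e ∉ T → |f (insert e T) - f T| ≤ c

lemma expect_powerset_insert {a : α} {s : Finset α} (ha : a ∉ s) (f : Finset α → ℝ) :
    𝔼 T ∈ (insert a s).powerset, f T = 𝔼 T ∈ s.powerset, (f T + f (insert a T)) / 2 := by
  simp only [expect_eq_sum_div_card, card_powerset, card_insert_of_notMem ha,
    sum_powerset_insert ha, ← sum_div, sum_add_distrib]
  push_cast
  ring

namespace HasBoundedDifferences

variable {s : Finset α} {f : Finset α → ℝ} {c : ℝ}

lemma neg (hf : HasBoundedDifferences s f c) : HasBoundedDifferences s (-f) c := by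
  intro e he T hT heT
  rw [Pi.neg_apply, Pi.neg_apply, neg_sub_neg, abs_sub_comm]
  exact hf e he T hT heT

lemma average_insert {a : α} (hf : HasBoundedDifferences (insert a s) f c) (ha : a ∉ s) :
    HasBoundedDifferences s (fun T => (f T + f (insert a T)) / 2) c := by
  intro e he T hT heT
  have hea : e ≠ a := ne_of_mem_of_not_mem he ha
  have h₁ := hf e (mem_insert_of_mem he) T (hT.trans (subset_insert a s)) heT
  have h₂ := hf e (mem_insert_of_mem he) (insert a T) (insert_subset_insert a hT)
    (by simp [hea, heT])
  rw [insert_comm] at h₂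
  calc |(f (insert e T) + f (insert a (insert e T))) / 2 - (f T + f (insert a T)) / 2|
      = |(f (insert e T) - f T) / 2 + (f (insert a (insert e T)) - f (insert a T)) / 2| := by
        ring_nf
    _ ≤ c / 2 + c / 2 := by
        refine (abs_add_le _ _).trans (add_le_add ?_ ?_) <;>
          rw [abs_div, abs_two] <;> linarith
    _ = c := add_halves c

/-- Hoeffding's lemma, iterated over the coordinates of the cube. -/
lemma sum_exp_mul_sub_expect_le (hf : HasBoundedDifferences s f c) (t : ℝ) :
    ∑ T ∈ s.powerset, exp (t * (f T - 𝔼 U ∈ s.powerset, f U)) ≤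
      2 ^ #s * exp (t ^ 2 * #s * c ^ 2 / 8) := by
  induction s using Finset.induction generalizing f with
  | empty => simp
  | @insert a s ha ih =>
    set F : Finset α → ℝ := fun T => (f T + f (insert a T)) / 2
    set E := 𝔼 U ∈ s.powerset, F U
    have hpair : ∀ T ∈ s.powerset, exp (t * (f T - E)) + exp (t * (f (insert a T) - E)) ≤
        exp (t * (F T - E)) * (2 * exp (t ^ 2 * c ^ 2 / 8)) := by
      intro T hT
      set d := f (insert a T) - f T
      have hd : |d| ≤ c := hf a (mem_insert_self a s) T
        ((mem_powerset.1 hT).trans (subset_insert a s)) (fun h => ha (mem_powerset.1 hT h))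
      have hsq : (t * d / 2) ^ 2 / 2 ≤ t ^ 2 * c ^ 2 / 8 := by
        have : d ^ 2 ≤ c ^ 2 := sq_le_sq' (neg_le_of_abs_le hd) (le_of_abs_le hd)
        nlinarith [sq_nonneg t]
      calc exp (t * (f T - E)) + exp (t * (f (insert a T) - E))
          = exp (t * (F T - E) - t * d / 2) + exp (t * (F T - E) + t * d / 2) := by
            congr 2 <;> ring
        _ ≤ 2 * exp (t * (F T - E)) * exp ((t * d / 2) ^ 2 / 2) := Real.exp_sub_add_exp_add_le _ _
        _ ≤ exp (t * (F T - E)) * (2 * exp (t ^ 2 * c ^ 2 / 8)) := by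
            rw [mul_comm 2, mul_assoc]
            gcongr
    calc ∑ T ∈ (insert a s).powerset, exp (t * (f T - 𝔼 U ∈ (insert a s).powerset, f U))
        = ∑ T ∈ s.powerset, (exp (t * (f T - E)) + exp (t * (f (insert a T) - E))) := by
          rw [expect_powerset_insert ha, sum_powerset_insert ha, sum_add_distrib]
      _ ≤ (∑ T ∈ s.powerset, exp (t * (F T - E))) * (2 * exp (t ^ 2 * c ^ 2 / 8)) := by
          rw [sum_mul]
          exact sum_le_sum hpair
      _ ≤ 2 ^ #s * exp (t ^ 2 * #s * c ^ 2 / 8) * (2 * exp (t ^ 2 * c ^ 2 / 8)) := by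
          gcongr
          exact ih (hf.average_insert ha)
      _ = 2 ^ #(insert a s) * exp (t ^ 2 * #(insert a s) * c ^ 2 / 8) := by
          have : t ^ 2 * (#s + 1 : ℕ) * c ^ 2 / 8 = t ^ 2 * #s * c ^ 2 / 8 + t ^ 2 * c ^ 2 / 8 := by
            push_cast
            ring
          rw [card_insert_of_notMem ha, this, exp_add, pow_succ]
          ring

lemma card_le_sub_expect_le (hf : HasBoundedDifferences s f c) {t : ℝ} (ht : 0 < t)
    (hsc : 0 < #s * c ^ 2) :
    (#{T ∈ s.powerset | t ≤ f T - 𝔼 U ∈ s.powerset, f U} : ℝ) ≤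
      2 ^ #s * exp (-2 * t ^ 2 / (#s * c ^ 2)) := by
  set E := 𝔼 U ∈ s.powerset, f U
  -- Chernoff's bound with the optimal parameter
  set θ := 4 * t / (#s * c ^ 2) with hθ_def
  have hθ : 0 < θ := by positivity
  have hexp : -2 * t ^ 2 / (#s * c ^ 2) = θ ^ 2 * #s * c ^ 2 / 8 + -(θ * t) := by
    rw [hθ_def]
    field_simp
    ring
  calc (#{T ∈ s.powerset | t ≤ f T - E} : ℝ)
      = ∑ T ∈ s.powerset with t ≤ f T - E, 1 := by simp
    _ ≤ ∑ T ∈ s.powerset with t ≤ f T - E, exp (θ * (f T - E)) * exp (-(θ * t)) := by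
        refine sum_le_sum fun T hT => ?_
        rw [← exp_add, one_le_exp_iff]
        nlinarith [(mem_filter.1 hT).2]
    _ ≤ ∑ T ∈ s.powerset, exp (θ * (f T - E)) * exp (-(θ * t)) :=
        sum_le_sum_of_subset_of_nonneg (filter_subset _ _) fun _ _ _ => by positivity
    _ ≤ 2 ^ #s * exp (θ ^ 2 * #s * c ^ 2 / 8) * exp (-(θ * t)) := by
        rw [← sum_mul]
        gcongr
        exact hf.sum_exp_mul_sub_expect_le θ
    _ = 2 ^ #s * exp (-2 * t ^ 2 / (#s * c ^ 2)) := by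
        rw [hexp, exp_add, mul_assoc]

lemma card_le_abs_sub_expect_le (hf : HasBoundedDifferences s f c) {t : ℝ} (ht : 0 < t)
    (hsc : 0 < #s * c ^ 2) :
    (#{T ∈ s.powerset | t ≤ |f T - 𝔼 U ∈ s.powerset, f U|} : ℝ) ≤
      2 * (2 ^ #s * exp (-2 * t ^ 2 / (#s * c ^ 2))) := by
  have hsub : {T ∈ s.powerset | t ≤ |f T - 𝔼 U ∈ s.powerset, f U|} ⊆
      {T ∈ s.powerset | t ≤ f T - 𝔼 U ∈ s.powerset, f U} ∪
        {T ∈ s.powerset | t ≤ (-f) T - 𝔼 U ∈ s.powerset, (-f) U} := by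
    intro T hT
    simp only [mem_filter, mem_union, Pi.neg_apply, expect_neg_distrib] at hT ⊢
    rcases le_abs'.1 hT.2 with h | h
    · exact Or.inr ⟨hT.1, by linarith⟩
    · exact Or.inl ⟨hT.1, h⟩
  calc _ ≤ (#({T ∈ s.powerset | t ≤ f T - 𝔼 U ∈ s.powerset, f U} ∪
        {T ∈ s.powerset | t ≤ (-f) T - 𝔼 U ∈ s.powerset, (-f) U}) : ℝ) := by
        exact_mod_cast card_le_card hsub
    _ ≤ (#{T ∈ s.powerset | t ≤ f T - 𝔼 U ∈ s.powerset, f U} : ℝ) +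
        #{T ∈ s.powerset | t ≤ (-f) T - 𝔼 U ∈ s.powerset, (-f) U} := by
        exact_mod_cast card_union_le _ _
    _ ≤ _ := by
        rw [two_mul]
        exact add_le_add (hf.card_le_sub_expect_le ht hsc) (hf.neg.card_le_sub_expect_le ht hsc)

/-- McDiarmid's inequality combined with a union bound. -/
theorem exists_forall_abs_sub_expect_lt {ι : Type*} {J : Finset ι} {g : ι → Finset α → ℝ}
    (hg : ∀ j ∈ J, HasBoundedDifferences s (g j) c) {t : ℝ} (ht : 0 < t)
    (hsc : 0 < #s * c ^ 2) (hJ : #J * 2 * exp (-2 * t ^ 2 / (#s * c ^ 2)) < 1) :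
    ∃ T ⊆ s, ∀ j ∈ J, |g j T - 𝔼 U ∈ s.powerset, g j U| < t := by
  by_contra! hbad
  have hcover : s.powerset ⊆
      J.biUnion fun j => {T ∈ s.powerset | t ≤ |g j T - 𝔼 U ∈ s.powerset, g j U|} := by
    intro T hT
    obtain ⟨j, hj, hjT⟩ := hbad T (mem_powerset.1 hT)
    exact mem_biUnion.2 ⟨j, hj, mem_filter.2 ⟨hT, hjT⟩⟩
  have : (2 : ℝ) ^ #s < 2 ^ #s := calc
    (2 : ℝ) ^ #s ≤ ∑ j ∈ J, (#{T ∈ s.powerset | t ≤ |g j T - 𝔼 U ∈ s.powerset, g j U|} : ℝ) := by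
        have := (card_le_card hcover).trans card_biUnion_le
        rw [card_powerset] at this
        exact_mod_cast this
    _ ≤ ∑ _j ∈ J, 2 * (2 ^ #s * exp (-2 * t ^ 2 / (#s * c ^ 2))) :=
        sum_le_sum fun j hj => (hg j hj).card_le_abs_sub_expect_le ht hsc
    _ = (#J * 2 * exp (-2 * t ^ 2 / (#s * c ^ 2))) * 2 ^ #s := by
        rw [sum_const, nsmul_eq_mul]
        ring
    _ < 1 * 2 ^ #s := by gcongr
    _ = 2 ^ #s := one_mul _
  exact lt_irrefl _ this

end HasBoundedDifferences

end Finset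

namespace List

variable {α : Type*} [BEq α] [LawfulBEq α]

/-- Sends `l[i]` to `v[i]`; only its values on `l` matter. -/
def zipMap (l v : List α) (x : α) : α := v.getD (l.idxOf x) x

lemma zipMap_getElem {l v : List α} (hl : l.Nodup) {i : ℕ} (hi : i < l.length)
    (hiv : i < v.length) : zipMap l v l[i] = v[i] := by
  rw [zipMap, hl.idxOf_getElem, getD_eq_getElem]

lemma map_zipMap {l v : List α} (hl : l.Nodup) (hlv : l.length = v.length) :
    l.map (zipMap l v) = v :=
  ext_getElem (by simpa using hlv) fun i hi _ => by
    rw [getElem_map, zipMap_getElem hl (by simpa using hi)]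

lemma zipMap_map {l : List α} (hl : l.Nodup) (f : α → α) {x : α} (hx : x ∈ l) :
    zipMap l (l.map f) x = f x := by
  obtain ⟨i, hi, rfl⟩ := getElem_of_mem hx
  rw [zipMap_getElem hl hi (by simpa using hi), getElem_map]

lemma zipMap_zipMap {l v : List α} (hl : l.Nodup) (hv : v.Nodup) (hlv : l.length = v.length)
    {x : α} (hx : x ∈ l) : zipMap v l (zipMap l v x) = x := by
  obtain ⟨i, hi, rfl⟩ := getElem_of_mem hx
  rw [zipMap_getElem hl hi (hlv ▸ hi), zipMap_getElem hv (hlv ▸ hi) hi]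

end List

open List (zipMap)

section Orderings

variable {V W : Finset ℕ} {l l' m σ : List ℕ}

lemma mem_orderings : l ∈ Orderings V ↔ l.Nodup ∧ l.toFinset = V := by
  rw [Orderings, List.mem_toFinset, List.mem_permutations]
  constructor
  · intro h
    exact ⟨h.nodup_iff.2 (V.sort_nodup _), by rw [List.toFinset_eq_of_perm _ _ h, V.sort_toFinset]⟩
  · rintro ⟨hl, rfl⟩
    exact List.perm_of_nodup_nodup_toFinset_eq hl (sort_nodup _ _) (sort_toFinset _ _).symm

lemma card_orderings (V : Finset ℕ) : #(Orderings V) = (#V)! := by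
  rw [Orderings, List.toFinset_card_of_nodup (List.nodup_permutations _ (V.sort_nodup _)),
    List.length_permutations, length_sort]

lemma length_of_mem_orderings (hl : l ∈ Orderings V) : l.length = #V := by
  obtain ⟨hnd, rfl⟩ := mem_orderings.1 hl
  exact (List.toFinset_card_of_nodup hnd).symm

lemma filter_mem_orderings (hσ : σ ∈ Orderings V) (hW : W ⊆ V) :
    σ.filter (· ∈ W) ∈ Orderings W := by
  obtain ⟨hnd, rfl⟩ := mem_orderings.1 hσ
  refine mem_orderings.2 ⟨hnd.filter _, ?_⟩
  ext x
  simpa using fun hx => hW hx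

lemma map_zipMap_of_mem_orderings (hl : l ∈ Orderings V) (hm : m ∈ Orderings W)
    (hVW : #V = #W) : l.map (zipMap l m) = m :=
  List.map_zipMap (mem_orderings.1 hl).1
    (by rw [length_of_mem_orderings hl, length_of_mem_orderings hm, hVW])

lemma mem_zipMap_of_mem_orderings (hl : l ∈ Orderings V) (hm : m ∈ Orderings W) (hVW : #V = #W)
    {x : ℕ} (hx : x ∈ V) : zipMap l m x ∈ W := by
  have hx' : zipMap l m x ∈ l.map (zipMap l m) :=
    List.mem_map_of_mem (by rwa [← List.mem_toFinset, (mem_orderings.1 hl).2])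
  rw [map_zipMap_of_mem_orderings hl hm hVW] at hx'
  rw [← (mem_orderings.1 hm).2]
  exact List.mem_toFinset.2 hx'

lemma zipMap_zipMap_of_mem_orderings (hl : l ∈ Orderings V) (hm : m ∈ Orderings W)
    (hVW : #V = #W) {x : ℕ} (hx : x ∈ V) : zipMap m l (zipMap l m x) = x :=
  List.zipMap_zipMap (mem_orderings.1 hl).1 (mem_orderings.1 hm).1
    (by rw [length_of_mem_orderings hl, length_of_mem_orderings hm, hVW])
    (by rwa [← List.mem_toFinset, (mem_orderings.1 hl).2])

lemma injOn_zipMap_of_mem_orderings (hl : l ∈ Orderings V) (hm : m ∈ Orderings W)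
    (hVW : #V = #W) : Set.InjOn (zipMap l m) V :=
  Set.LeftInvOn.injOn fun _ hx => zipMap_zipMap_of_mem_orderings hl hm hVW hx

lemma image_zipMap_subset_of_mem_orderings (hl : l ∈ Orderings V) (hm : m ∈ Orderings W)
    (hVW : #V = #W) {A : Finset ℕ} (hA : A ⊆ V) : A.image (zipMap l m) ⊆ W :=
  image_subset_iff.2 fun _ hx => mem_zipMap_of_mem_orderings hl hm hVW (hA hx)

lemma card_image_zipMap_of_mem_orderings (hl : l ∈ Orderings V) (hm : m ∈ Orderings W)
    (hVW : #V = #W) {A : Finset ℕ} (hA : A ⊆ V) : #(A.image (zipMap l m)) = #A :=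
  card_image_of_injOn ((injOn_zipMap_of_mem_orderings hl hm hVW).mono hA)

lemma image_zipMap_of_mem_orderings (hl : l ∈ Orderings V) (hm : m ∈ Orderings W)
    (hVW : #V = #W) : V.image (zipMap l m) = W :=
  eq_of_subset_of_card_le (image_zipMap_subset_of_mem_orderings hl hm hVW subset_rfl)
    (by rw [card_image_zipMap_of_mem_orderings hl hm hVW subset_rfl, hVW])

lemma image_zipMap_image_zipMap_of_mem_orderings (hl : l ∈ Orderings V) (hm : m ∈ Orderings W)
    (hVW : #V = #W) {A : Finset ℕ} (hA : A ⊆ V) :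
    (A.image (zipMap l m)).image (zipMap m l) = A := by
  rw [image_image]
  conv_rhs => rw [← image_id (s := A)]
  exact image_congr fun x hx => zipMap_zipMap_of_mem_orderings hl hm hVW (hA hx)

lemma zipMap_map_zipMap (hl' : l' ∈ Orderings V) {x : ℕ} (hx : x ∈ V) :
    zipMap l' (l'.map (zipMap l m)) x = zipMap l m x :=
  List.zipMap_map (mem_orderings.1 hl').1 _ (by rwa [← List.mem_toFinset, (mem_orderings.1 hl').2])

lemma map_zipMap_mem_orderings (hl : l ∈ Orderings V) (hl' : l' ∈ Orderings V)
    (hm : m ∈ Orderings W) (hVW : #V = #W) : l'.map (zipMap l m) ∈ Orderings W := by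
  obtain ⟨hl'nd, rfl⟩ := mem_orderings.1 hl'
  refine mem_orderings.2 ⟨hl'nd.map_on fun x hx y hy => ?_, ?_⟩
  · exact injOn_zipMap_of_mem_orderings hl hm hVW (by simpa using hx) (by simpa using hy)
  · rw [← image_zipMap_of_mem_orderings hl hm hVW]
    ext
    simp

lemma map_zipMap_map_zipMap (hl : l ∈ Orderings V) (hl' : l' ∈ Orderings V)
    (hm : m ∈ Orderings W) (hVW : #V = #W) : l.map (zipMap l' (l'.map (zipMap l m))) = m := by
  rw [List.map_congr_left fun x hx => zipMap_map_zipMap hl'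
    (by rwa [← List.mem_toFinset, (mem_orderings.1 hl).2] at hx)]
  exact map_zipMap_of_mem_orderings hl hm hVW

end Orderings

/-- The exponent of McDiarmid's bound for `copyCount`, simplified with `Nat.choose_mul`. -/
lemma mcdiarmid_exponent_eq {r k n : ℕ} (hrk : r ≤ k) (hkn : k ≤ n) (ε : ℝ) :
    -2 * (ε * (n.choose k / 2 ^ k.choose r)) ^ 2 /
        (n.choose r * ((n - r).choose (k - r) : ℝ) ^ 2) =
      -(2 * ε ^ 2 * n.choose r / (4 ^ k.choose r * (k.choose r : ℝ) ^ 2)) := by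
  have hid : (n.choose k * k.choose r : ℝ) = n.choose r * (n - r).choose (k - r) := by
    exact_mod_cast Nat.choose_mul hrk
  have h₁ : (0 : ℝ) < n.choose r := by exact_mod_cast Nat.choose_pos (hrk.trans hkn)
  have h₂ : (0 : ℝ) < (n - r).choose (k - r) := by exact_mod_cast Nat.choose_pos (by omega)
  have h₃ : (0 : ℝ) < k.choose r := by exact_mod_cast Nat.choose_pos hrk
  have h₄ : (4 : ℝ) ^ k.choose r = (2 ^ k.choose r) ^ 2 := by
    rw [← pow_mul, mul_comm, pow_mul]
    norm_num
  rw [h₄]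
  field_simp
  linear_combination (-ε ^ 2 * (n.choose k * k.choose r + n.choose r * (n - r).choose (k - r)))
    * hid

namespace FinHypergraph

variable {r : ℕ}

def ofEdges (V : Finset ℕ) (T : Finset (Finset ℕ)) (hT : T ⊆ powersetCard r V) :
    FinHypergraph r where
  verts := V
  edges := T
  card_edge _ he := (mem_powersetCard.1 (hT he)).2
  edge_subset _ he := (mem_powersetCard.1 (hT he)).1

def induce (G : FinHypergraph r) (S : Finset ℕ) : FinHypergraph r where
  verts := S
  edges := {e ∈ G.edges | e ⊆ S}
  card_edge _ he := G.card_edge _ (mem_filter.1 he).1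
  edge_subset _ he := (mem_filter.1 he).2

lemma induce_isInduced (G : FinHypergraph r) {S : Finset ℕ} (hS : S ⊆ G.verts) :
    (G.induce S).IsInduced G :=
  ⟨hS, fun e he => by
    simp only [induce, mem_filter, and_iff_left_iff_imp]
    exact fun _ => he⟩

/-- `m` spans a copy of `(H, l)` in the edge set `T`, matched by `l[i] ↦ m[i]`. For `T = G.edges`
and `m = σ|S` this says that `(H, l) ≅ (G[S], σ|S)` as ordered hypergraphs. -/
def IsCopy (H : FinHypergraph r) (T : Finset (Finset ℕ)) (l m : List ℕ) : Prop :=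
  T ∩ powersetCard r m.toFinset = H.edges.image (·.image (zipMap l m))

instance (H : FinHypergraph r) (T : Finset (Finset ℕ)) (l m : List ℕ) :
    Decidable (H.IsCopy T l m) :=
  inferInstanceAs (Decidable (_ = _))

variable {n : ℕ} {H G : FinHypergraph r} {T : Finset (Finset ℕ)} {S : Finset ℕ}
  {l l' m : List ℕ}

lemma isCopy_insert_iff {e : Finset ℕ} (he : ¬ e ⊆ m.toFinset) :
    H.IsCopy (insert e T) l m ↔ H.IsCopy T l m := by
  rw [IsCopy, IsCopy, insert_inter_of_notMem (fun h => he (mem_powersetCard.1 h).1)]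

lemma image_edges_subset_powersetCard (hl : l ∈ Orderings H.verts) (hm : m ∈ Orderings S)
    (hHS : #H.verts = #S) : H.edges.image (·.image (zipMap l m)) ⊆ powersetCard r S := by
  intro B hB
  obtain ⟨A, hA, rfl⟩ := mem_image.1 hB
  rw [mem_powersetCard, card_image_zipMap_of_mem_orderings hl hm hHS (H.edge_subset A hA)]
  exact ⟨image_zipMap_subset_of_mem_orderings hl hm hHS (H.edge_subset A hA), H.card_edge A hA⟩

lemma card_filter_isCopy {V : Finset ℕ} (hl : l ∈ Orderings H.verts) (hm : m ∈ Orderings S)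
    (hHS : #H.verts = #S) (hSV : S ⊆ V) :
    #{T ∈ (powersetCard r V).powerset | H.IsCopy T l m} =
      2 ^ ((#V).choose r - (#H.verts).choose r) := by
  have hS : m.toFinset = S := (mem_orderings.1 hm).2
  rw [hHS, ← card_powersetCard r S, ← card_powersetCard r V, ← hS]
  exact card_filter_powerset_inter_eq (hS ▸ image_edges_subset_powersetCard hl hm hHS)
    (powersetCard_mono (hS ▸ hSV))

lemma isIso_induce_of_isCopy (hl : l ∈ Orderings H.verts) (hm : m ∈ Orderings S)
    (hHS : #H.verts = #S) (h : H.IsCopy G.edges l m) : H.IsIso (G.induce S) (zipMap l m) := by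
  have hS : m.toFinset = S := (mem_orderings.1 hm).2
  refine ⟨injOn_zipMap_of_mem_orderings hl hm hHS, image_zipMap_of_mem_orderings hl hm hHS,
    fun e he => ?_⟩
  have hedge : e.image (zipMap l m) ∈ (G.induce S).edges ↔
      e.image (zipMap l m) ∈ G.edges ∩ powersetCard r S := by
    simp only [induce, mem_filter, mem_inter, mem_powersetCard]
    exact ⟨fun h => ⟨h.1, h.2, G.card_edge _ h.1⟩, fun h => ⟨h.1, h.2.1⟩⟩
  rw [hedge, ← hS, h, mem_image]
  refine ⟨fun he' => ⟨e, he', rfl⟩, ?_⟩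
  rintro ⟨e', he', heq⟩
  have := congrArg (·.image (zipMap m l)) heq
  simp only [image_zipMap_image_zipMap_of_mem_orderings hl hm hHS he,
    image_zipMap_image_zipMap_of_mem_orderings hl hm hHS (H.edge_subset e' he')] at this
  exact this ▸ he'

lemma isCopy_map_zipMap_iff (hl : l ∈ Orderings H.verts) (hl' : l' ∈ Orderings H.verts)
    (hm : m ∈ Orderings S) (hHS : #H.verts = #S) :
    H.IsCopy T l' (l'.map (zipMap l m)) ↔ H.IsCopy T l m := by
  have hS : (l'.map (zipMap l m)).toFinset = m.toFinset :=
    (mem_orderings.1 (map_zipMap_mem_orderings hl hl' hm hHS)).2.trans (mem_orderings.1 hm).2.symm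
  have himage : H.edges.image (·.image (zipMap l' (l'.map (zipMap l m)))) =
      H.edges.image (·.image (zipMap l m)) :=
    image_congr fun e he => image_congr fun x hx =>
      zipMap_map_zipMap hl' (H.edge_subset e (mem_coe.1 he) hx)
  rw [IsCopy, IsCopy, hS, himage]

lemma card_filter_isCopy_congr (hl : l ∈ Orderings H.verts) (hl' : l' ∈ Orderings H.verts)
    (hHS : #H.verts = #S) :
    #{m ∈ Orderings S | H.IsCopy T l m} = #{m ∈ Orderings S | H.IsCopy T l' m} := by
  refine card_bij' (fun m _ => l'.map (zipMap l m)) (fun m _ => l.map (zipMap l' m))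
    (fun m hm => ?_) (fun m hm => ?_) (fun m hm => ?_) (fun m hm => ?_) <;>
    obtain ⟨hm, hcopy⟩ := mem_filter.1 hm
  · exact mem_filter.2 ⟨map_zipMap_mem_orderings hl hl' hm hHS,
      (isCopy_map_zipMap_iff hl hl' hm hHS).2 hcopy⟩
  · exact mem_filter.2 ⟨map_zipMap_mem_orderings hl' hl hm hHS,
      (isCopy_map_zipMap_iff hl' hl hm hHS).2 hcopy⟩
  · exact map_zipMap_map_zipMap hl hl' hm hHS
  · exact map_zipMap_map_zipMap hl' hl hm hHS

variable (H) in

def copyCount (V : Finset ℕ) (T : Finset (Finset ℕ)) (l σ : List ℕ) : ℕ :=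
  #{S ∈ powersetCard #H.verts V | H.IsCopy T l (σ.filter (· ∈ S))}

variable {V : Finset ℕ} {σ : List ℕ}

lemma sum_copyCount (hσ : σ ∈ Orderings V) (hl : l ∈ Orderings H.verts) :
    ∑ T ∈ (powersetCard r V).powerset, H.copyCount V T l σ =
      (#V).choose #H.verts * 2 ^ ((#V).choose r - (#H.verts).choose r) := by
  simp only [copyCount, card_filter]
  rw [sum_comm, ← card_powersetCard, ← smul_eq_mul, ← sum_const]
  refine sum_congr rfl fun S hS => ?_
  obtain ⟨hSV, hScard⟩ := mem_powersetCard.1 hS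
  rw [← card_filter, card_filter_isCopy hl (filter_mem_orderings hσ hSV) hScard.symm hSV]

lemma expect_copyCount (hk : #H.verts ≤ #V) (hσ : σ ∈ Orderings V)
    (hl : l ∈ Orderings H.verts) :
    𝔼 T ∈ (powersetCard r V).powerset, (H.copyCount V T l σ : ℝ) =
      (#V).choose #H.verts / 2 ^ (#H.verts).choose r := by
  have hb : (#H.verts).choose r ≤ (#V).choose r := Nat.choose_le_choose r hk
  rw [expect_eq_sum_div_card, ← Nat.cast_sum, sum_copyCount hσ hl, card_powerset,
    card_powersetCard]
  push_cast
  rw [div_eq_div_iff (by positivity) (by positivity), mul_assoc, ← pow_add,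
    Nat.sub_add_cancel hb]

lemma hasBoundedDifferences_copyCount (hrk : r ≤ #H.verts) (hσ : σ ∈ Orderings V) :
    (powersetCard r V).HasBoundedDifferences (fun T => (H.copyCount V T l σ : ℝ))
      ((#V - r).choose (#H.verts - r)) := by
  intro e he T _ _
  obtain ⟨heV, hecard⟩ := mem_powersetCard.1 he
  have hcount : #{S ∈ powersetCard #H.verts V | e ⊆ S} = (#V - r).choose (#H.verts - r) := by
    rw [card_filter_powersetCard_subset e V _ heV (hecard ▸ hrk), hecard]
  rw [← hcount]
  refine abs_card_filter_sub_card_filter_le _ fun S hS heS => isCopy_insert_iff ?_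
  rwa [(mem_orderings.1 (filter_mem_orderings hσ (mem_powersetCard.1 hS).1)).2]

lemma exists_forall_abs_copyCount_sub_lt (hrk : r ≤ #H.verts) (hkn : #H.verts ≤ n) {ε : ℝ}
    (hε : 0 < ε) (hexp : 2 * n ! * (#H.verts)! <
      exp (2 * ε ^ 2 * n.choose r / (4 ^ (#H.verts).choose r * ((#H.verts).choose r : ℝ) ^ 2))) :
    ∃ T ⊆ powersetCard r (range n), ∀ p ∈ Orderings (range n) ×ˢ Orderings H.verts,
      |(H.copyCount (range n) T p.2 p.1 : ℝ) - n.choose #H.verts / 2 ^ (#H.verts).choose r| <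
        ε * (n.choose #H.verts / 2 ^ (#H.verts).choose r) := by
  have hmean : 0 < (n.choose #H.verts / 2 ^ (#H.verts).choose r : ℝ) := by
    have := Nat.choose_pos hkn
    positivity
  have hc : 0 < (#(powersetCard r (range n)) * ((n - r).choose (#H.verts - r) : ℝ) ^ 2) := by
    have := Nat.choose_pos (hrk.trans hkn)
    have := Nat.choose_pos (Nat.sub_le_sub_right hkn r)
    simp only [card_powersetCard, card_range]
    positivity
  have hunion := HasBoundedDifferences.exists_forall_abs_sub_expect_lt
    (J := Orderings (range n) ×ˢ Orderings H.verts)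
    (g := fun p T => (H.copyCount (range n) T p.2 p.1 : ℝ))
    (fun p hp => by simpa using hasBoundedDifferences_copyCount hrk (mem_product.1 hp).1)
    (mul_pos hε hmean) hc
  simp only [card_powersetCard, card_range, card_product, card_orderings,
    mcdiarmid_exponent_eq hrk hkn, exp_neg] at hunion
  obtain ⟨T, hT, hgood⟩ := hunion (by
    rw [← div_eq_mul_inv, div_lt_one (exp_pos _)]
    push_cast
    linarith)
  refine ⟨T, hT, fun p hp => ?_⟩
  have := hgood p hp
  rwa [expect_copyCount (by simpa using hkn) (mem_product.1 hp).1 (mem_product.1 hp).2,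
    card_range] at this

end FinHypergraph

namespace ConsistentRandomOrdering

section

variable {r : ℕ} {𝒞 : Set (FinHypergraph r)} (cro : ConsistentRandomOrdering 𝒞)
  {G H : FinHypergraph r} {l : List ℕ}

lemma sum_filter_isCopy {S : Finset ℕ} (hG : G ∈ 𝒞) (hH : H ∈ 𝒞) (hGS : G.induce S ∈ 𝒞)
    (hS : S ⊆ G.verts) (hHS : #H.verts = #S) (hl : l ∈ Orderings H.verts) :
    ∑ σ ∈ Orderings G.verts with H.IsCopy G.edges l (σ.filter (· ∈ S)), cro.μ G σ =
      #{m ∈ Orderings S | H.IsCopy G.edges l m} * cro.μ H l := by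
  rw [← sum_fiberwise_of_maps_to (g := fun σ => σ.filter (· ∈ S))
    (t := {m ∈ Orderings S | H.IsCopy G.edges l m}) fun σ hσ => mem_filter.2
      ⟨filter_mem_orderings (mem_filter.1 hσ).1 hS, (mem_filter.1 hσ).2⟩,
    ← nsmul_eq_mul, ← sum_const]
  refine sum_congr rfl fun m hm => ?_
  obtain ⟨hm, hcopy⟩ := mem_filter.1 hm
  have hiso := cro.iso_invariant H hH _ hGS _
    (FinHypergraph.isIso_induce_of_isCopy hl hm hHS hcopy) l hl
  rw [map_zipMap_of_mem_orderings hl hm hHS] at hiso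
  rw [← hiso, cro.restriction G hG _ hGS (G.induce_isInduced hS) m hm, filter_filter]
  exact sum_congr (filter_congr fun σ _ => and_iff_right_of_imp fun h => h ▸ hcopy) fun _ _ => rfl

lemma sum_mul_copyCount (hG : G ∈ 𝒞) (hH : H ∈ 𝒞) (hind : ∀ S ⊆ G.verts, G.induce S ∈ 𝒞)
    (hl : l ∈ Orderings H.verts) :
    ∑ σ ∈ Orderings G.verts, cro.μ G σ * H.copyCount G.verts G.edges l σ =
      (∑ S ∈ powersetCard #H.verts G.verts, #{m ∈ Orderings S | H.IsCopy G.edges l m}) *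
        cro.μ H l := by
  conv_lhs => simp only [FinHypergraph.copyCount, card_filter, Nat.cast_sum, mul_sum,
    Nat.cast_ite, Nat.cast_one, Nat.cast_zero, mul_ite, mul_one, mul_zero]
  rw [sum_comm, Nat.cast_sum, sum_mul]
  refine sum_congr rfl fun S hS => ?_
  obtain ⟨hSV, hScard⟩ := mem_powersetCard.1 hS
  rw [← sum_filter, cro.sum_filter_isCopy hG hH (hind S hSV) hSV hScard.symm hl]

end

section

variable {r n : ℕ} (cro : ConsistentRandomOrdering {G : FinHypergraph r | #G.verts ≤ n})
  {H : FinHypergraph r}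

lemma half_sum_abs_sub_inv_factorial_le_one {k : ℕ} (hH : #H.verts = k) (hkn : k ≤ n) :
    (1 / 2) * ∑ l ∈ Orderings H.verts, |cro.μ H l - (k ! : ℝ)⁻¹| ≤ 1 := by
  subst hH
  have := half_sum_abs_sub_inv_card_le_one (fun l _ => cro.nonneg H l) (cro.total H hkn)
  rwa [card_orderings] at this

/-- For the hypergraph `G` of `exists_forall_abs_copyCount_sub_lt`, `sum_mul_copyCount` writes
`a l * μ H l` as a `μ G`-average of counts that are all close to their mean, and `a l` does not
depend on `l`. -/
theorem half_sum_abs_sub_inv_factorial_le {k : ℕ} (hH : #H.verts = k) (hrk : r ≤ k)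
    (hkn : k ≤ n) {ε : ℝ} (hε₀ : 0 < ε) (hε : ε ≤ 1 / 2) (hexp : 2 * n ! * k ! <
      exp (2 * ε ^ 2 * n.choose r / (4 ^ k.choose r * (k.choose r : ℝ) ^ 2))) :
    (1 / 2) * ∑ l ∈ Orderings H.verts, |cro.μ H l - (k ! : ℝ)⁻¹| ≤ 2 * ε := by
  subst hH
  obtain ⟨T, hTn, hT⟩ := FinHypergraph.exists_forall_abs_copyCount_sub_lt hrk hkn hε₀ hexp
  set G := FinHypergraph.ofEdges (range n) T hTn
  have hG : G ∈ {G : FinHypergraph r | #G.verts ≤ n} := (card_range n).le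
  have hind : ∀ S ⊆ G.verts, G.induce S ∈ {G : FinHypergraph r | #G.verts ≤ n} :=
    fun S hS => (card_le_card hS).trans hG
  set a : List ℕ → ℕ := fun l =>
    ∑ S ∈ powersetCard #H.verts G.verts, #{m ∈ Orderings S | H.IsCopy G.edges l m} with ha_def
  have hclose : ∀ l ∈ Orderings H.verts, |a l * cro.μ H l - n.choose #H.verts /
      2 ^ (#H.verts).choose r| ≤ ε * (n.choose #H.verts / 2 ^ (#H.verts).choose r) := by
    intro l hl
    rw [ha_def, ← cro.sum_mul_copyCount hG hkn hind hl]
    exact abs_sum_mul_sub_le (fun σ _ => cro.nonneg G σ) (cro.total G hG)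
      fun σ hσ => (hT (σ, l) (mem_product.2 ⟨hσ, hl⟩)).le
  obtain ⟨l₀, hl₀⟩ : (Orderings H.verts).Nonempty :=
    Finset.card_pos.1 (by rw [card_orderings]; exact Nat.factorial_pos _)
  have ha : ∀ l ∈ Orderings H.verts, a l = a l₀ := fun l hl => sum_congr rfl fun S hS =>
    FinHypergraph.card_filter_isCopy_congr hl hl₀ (mem_powersetCard.1 hS).2.symm
  have hmean : (0 : ℝ) < n.choose #H.verts / 2 ^ (#H.verts).choose r := by
    have := Nat.choose_pos hkn
    positivity
  have := half_sum_abs_sub_inv_card_le (cro.total H hkn) hmean hε fun l hl => ha l hl ▸ hclose l hl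
  rwa [card_orderings] at this

end

end ConsistentRandomOrdering

lemma two_mul_factorial_mul_factorial_lt_exp {k n : ℕ} (hkn : k ≤ n) (hn : 2 ≤ n) :
    (2 * n ! * k ! : ℝ) < exp (4 * n * log n) := by
  have h₁ : 2 < n ^ (2 * n) := calc
    2 < 2 ^ 2 := by norm_num
    _ ≤ n ^ 2 := Nat.pow_le_pow_left hn 2
    _ ≤ n ^ (2 * n) := Nat.pow_le_pow_right (by omega) (by omega)
  have h₂ : 2 * n ! * k ! < n ^ (4 * n) := calc
    2 * n ! * k ! ≤ 2 * n ^ n * n ^ n := by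
      gcongr
      · exact Nat.factorial_le_pow n
      · exact (Nat.factorial_le hkn).trans (Nat.factorial_le_pow n)
    _ < n ^ (2 * n) * n ^ n * n ^ n := by
      have : 0 < n ^ n := by positivity
      gcongr
    _ = n ^ (4 * n) := by ring
  have h₃ : exp (4 * n * log n) = (n : ℝ) ^ (4 * n) := by
    rw [show (4 * n * log n : ℝ) = ((4 * n : ℕ) : ℝ) * log n by push_cast; ring, exp_nat_mul,
      exp_log (by positivity)]
  rw [h₃]
  exact_mod_cast h₂

lemma pow_div_le_choose {r n : ℕ} (hrn : r ≤ n) : ((n : ℝ) / r) ^ r / r ! ≤ n.choose r := by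
  refine le_trans ?_ (Nat.pow_le_choose r n)
  gcongr
  rw [Nat.cast_sub (by omega), Nat.cast_add_one]
  rcases Nat.eq_zero_or_pos r with rfl | hr
  · simp only [CharP.cast_eq_zero, div_zero, sub_zero]
    positivity
  · rw [div_le_iff₀ (by exact_mod_cast hr)]
    have : (r : ℝ) ≤ n := by exact_mod_cast hrn
    nlinarith [(by exact_mod_cast hr : (1 : ℝ) ≤ r)]

/-- This is where the constant `2 * r ^ r * r ! * 4 ^ b * b ^ 2`, `b = k.choose r`, in front of
`log n / n ^ (r - 1)` comes from: with it, the exponent in `half_sum_abs_sub_inv_factorial_le`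
exceeds `log (2 * n ! * k !)`. -/
lemma four_mul_log_le {r k n : ℕ} (hr : 1 ≤ r) (hrk : r ≤ k) (hrn : r ≤ n) :
    4 * n * log n ≤ 2 * (2 * r ^ r * r ! * 4 ^ k.choose r * (k.choose r : ℝ) ^ 2 *
      (log n / (n : ℝ) ^ (r - 1))) * n.choose r / (4 ^ k.choose r * (k.choose r : ℝ) ^ 2) := by
  have hb := Nat.choose_pos hrk
  have hn : (0 : ℝ) < n := by exact_mod_cast (hr.trans hrn)
  have hpow : (n : ℝ) ^ r = n ^ (r - 1) * n := by rw [← pow_succ, Nat.sub_add_cancel hr]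
  have hchoose := pow_div_le_choose hrn
  rw [div_pow, div_div, hpow, div_le_iff₀ (by positivity)] at hchoose
  have hlog := log_nonneg (by exact_mod_cast (hr.trans hrn) : (1 : ℝ) ≤ n)
  field_simp
  nlinarith [mul_le_mul_of_nonneg_left hchoose (by positivity : (0 : ℝ) ≤ 4 * log n)]

/-- Quantitative uniqueness: for `2 ≤ r ≤ k ≤ n`, there is a constant `C = C(k,r)`
such that for any consistent random ordering on `r`-uniform hypergraphs of size
at most `n` and any hypergraph `H` of size `k`, the total variation distance from
the uniform ordering `ν_H` (which puts mass `1/k!` on each ordering) is at most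
`C·√(log n / n^(r-1))`. -/
theorem uniqueErgodicity.stmt2 (k r : ℕ) (hr : 2 ≤ r) (hrk : r ≤ k) :
    ∃ C : ℝ, ∀ n : ℕ, k ≤ n →
      ∀ cro : ConsistentRandomOrdering {G : FinHypergraph r | G.verts.card ≤ n},
      ∀ H : FinHypergraph r, H.verts.card = k →
        (1 / 2) * ∑ l ∈ Orderings H.verts, |cro.μ H l - ((k.factorial : ℝ))⁻¹|
          ≤ C * Real.sqrt (Real.log n / (n : ℝ) ^ (r - 1)) := by
  set K : ℝ := 2 * r ^ r * r ! * 4 ^ k.choose r * (k.choose r : ℝ) ^ 2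
  have hK : 0 < K := by
    have := Nat.choose_pos hrk
    positivity
  refine ⟨2 * √K, fun n hkn cro H hH => ?_⟩
  have hx : 0 < log n / (n : ℝ) ^ (r - 1) :=
    div_pos (log_pos (by exact_mod_cast (by omega : 1 < n)))
      (pow_pos (by exact_mod_cast (by omega : 0 < n)) _)
  rw [mul_assoc, ← sqrt_mul hK.le]
  rcases le_or_gt √(K * (log n / (n : ℝ) ^ (r - 1))) (1 / 2) with hε | hε
  · refine cro.half_sum_abs_sub_inv_factorial_le hH hrk hkn (sqrt_pos.2 (mul_pos hK hx)) hε ?_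
    calc (2 * n ! * k ! : ℝ) < exp (4 * n * log n) :=
          two_mul_factorial_mul_factorial_lt_exp hkn (by omega)
      _ ≤ _ := by
          rw [exp_le_exp, sq_sqrt (mul_pos hK hx).le]
          exact four_mul_log_le (by omega) hrk (by omega)
  · linarith [cro.half_sum_abs_sub_inv_factorial_le_one hH hkn]
end

section
/- Let r ≥ 2 and g ≥ 3 be integers. There is a constant C = C(r,g) > 0 such that for all n ≥ r, there exists an r-uniform hypergraph on n vertices with at least C·n^{(g-1)/(g-2)} hyperedges and girth at least g. -/
/-!
Erdős' deletion method. Write `g = m + 2` and keep each `r`-subset of `[n]` independently with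
probability `p = c n^{1/m} / n^{r-1}`. The expected number of edges is at least
`c n^{1+1/m} / (r^r r!)`. A closed trail of length `L` with distinct edges is determined by its
`L` vertices and the other `r - 2` vertices of each edge, so there are at most `(n^{r-1})^L` of
them, each surviving with probability `p^L`; for `2 ≤ L ≤ m + 1` this is an expected number of
at most `c² n^{1+1/m}`. A shortest cycle has distinct edges, so deleting one edge from each
surviving short trail leaves girth at least `g`, and for `c = 1/(2 m r^r r!)` at least
`c n^{1+1/m} / (2 r^r r!)` edges remain; note `1 + 1/m = (g-1)/(g-2)`.
-/

open Finset

/-- `G` contains a cycle of length `L`: an alternating sequence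
`x 0, e 0, x 1, e 1, …, x (L-1), e (L-1), x L` of vertices and hyperedges with
`x i ≠ x (i+1)`, `x i, x (i+1) ∈ e i`, consecutive hyperedges distinct, `L ≥ 2`,
and `x 0 = x L`. -/
def FinHypergraph.HasCycleOfLength {r : ℕ} (G : FinHypergraph r) (L : ℕ) : Prop :=
  2 ≤ L ∧ ∃ x : ℕ → ℕ, ∃ e : ℕ → Finset ℕ,
    (∀ i < L, e i ∈ G.edges) ∧
    (∀ i < L, x i ≠ x (i + 1)) ∧
    (∀ i < L, x i ∈ e i ∧ x (i + 1) ∈ e i) ∧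
    (∀ i, i + 1 < L → e i ≠ e (i + 1)) ∧
    x 0 = x L

/-- `G` has girth at least `g`: every cycle has length at least `g`. -/
def FinHypergraph.GirthGE {r : ℕ} (G : FinHypergraph r) (g : ℕ) : Prop :=
  ∀ L : ℕ, G.HasCycleOfLength L → g ≤ L

section BinomialSubset

variable {α β : Type*}

/-- The probability of the outcome `S` when each element of `A` is kept independently with
probability `p`. -/
def binomialWeight (A : Finset α) (p : ℝ) (S : Finset α) : ℝ :=
  p ^ #S * (1 - p) ^ (#A - #S)

lemma binomialWeight_pos {A : Finset α} {p : ℝ} (hp₀ : 0 < p) (hp₁ : p < 1) (S : Finset α) :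
    0 < binomialWeight A p S := by
  unfold binomialWeight
  have : 0 < 1 - p := by linarith
  positivity

lemma sum_binomialWeight_filter_superset [DecidableEq α] {A T : Finset α} (hT : T ⊆ A) (p : ℝ) :
    ∑ S ∈ A.powerset with T ⊆ S, binomialWeight A p S = p ^ #T := by
  have hIcc : {S ∈ A.powerset | T ⊆ S} = Finset.Icc T A := by
    ext S
    simp [and_comm]
  have hdisj : ∀ U ∈ (A \ T).powerset, Disjoint T U := fun U hU =>
    disjoint_of_subset_right (mem_powerset.1 hU) disjoint_sdiff
  have hinj : Set.InjOn (T ∪ ·) (A \ T).powerset := fun U hU U' hU' h => by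
    rw [← union_sdiff_cancel_left (hdisj U hU), ← union_sdiff_cancel_left (hdisj U' hU')]
    exact congrArg (· \ T) h
  rw [hIcc, Icc_eq_image_powerset hT, sum_image hinj]
  calc ∑ U ∈ (A \ T).powerset, binomialWeight A p (T ∪ U)
      = ∑ U ∈ (A \ T).powerset, p ^ #T * (p ^ #U * (1 - p) ^ (#(A \ T) - #U)) := by
        refine sum_congr rfl fun U hU => ?_
        have hcard : #U ≤ #A - #T := card_sdiff_of_subset hT ▸ card_le_card (mem_powerset.1 hU)
        rw [binomialWeight, card_union_of_disjoint (hdisj U hU), card_sdiff_of_subset hT, pow_add,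
          show #A - (#T + #U) = #A - #T - #U by omega]
        ring
    _ = p ^ #T := by rw [← mul_sum, sum_pow_mul_eq_add_pow, add_sub_cancel, one_pow, mul_one]

lemma sum_binomialWeight [DecidableEq α] (A : Finset α) (p : ℝ) :
    ∑ S ∈ A.powerset, binomialWeight A p S = 1 := by
  simpa using sum_binomialWeight_filter_superset (empty_subset A) p

lemma sum_binomialWeight_mul_card_filter [DecidableEq α] (A : Finset α) (p : ℝ) (B : Finset β)
    (m : β → Finset α) (hm : ∀ b ∈ B, m b ⊆ A) :
    ∑ S ∈ A.powerset, binomialWeight A p S * #{b ∈ B | m b ⊆ S} = ∑ b ∈ B, p ^ #(m b) := by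
  simp_rw [card_filter, Nat.cast_sum, mul_sum]
  rw [sum_comm]
  refine sum_congr rfl fun b hb => ?_
  rw [← sum_binomialWeight_filter_superset (hm b hb) p, sum_filter]
  refine sum_congr rfl fun S _ => ?_
  split_ifs <;> simp

lemma sum_binomialWeight_mul_card [DecidableEq α] (A : Finset α) (p : ℝ) :
    ∑ S ∈ A.powerset, binomialWeight A p S * #S = #A * p := by
  have hfilter : ∀ S ∈ A.powerset, {E ∈ A | {E} ⊆ S} = S := fun S hS => by
    ext E
    simp only [mem_filter, singleton_subset_iff, and_iff_right_iff_imp]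
    exact fun hE => mem_powerset.1 hS hE
  calc ∑ S ∈ A.powerset, binomialWeight A p S * #S
      = ∑ S ∈ A.powerset, binomialWeight A p S * #{E ∈ A | {E} ⊆ S} := by
        refine sum_congr rfl fun S hS => ?_
        rw [hfilter S hS]
    _ = #A * p := by
        rw [sum_binomialWeight_mul_card_filter A p A singleton fun _ => singleton_subset_iff.2]
        simp

lemma exists_le_of_le_sum_binomialWeight_mul [DecidableEq α] {A : Finset α} {p t : ℝ} (hp₀ : 0 < p)
    (hp₁ : p < 1) (f : Finset α → ℝ)
    (h : t ≤ ∑ S ∈ A.powerset, binomialWeight A p S * f S) : ∃ S ⊆ A, t ≤ f S := by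
  rw [← one_mul t, ← sum_binomialWeight A p, sum_mul] at h
  obtain ⟨S, hS, hle⟩ := exists_le_of_sum_le ⟨∅, empty_mem_powerset A⟩ h
  exact ⟨S, mem_powerset.1 hS, le_of_mul_le_mul_left hle (binomialWeight_pos hp₀ hp₁ S)⟩

end BinomialSubset

section ClosedTrails

/-- Closed walks `x 0, e 0, x 1, …, x (L-1), e (L-1), x 0` in which the `L` hyperedges are
pairwise distinct members of `S`; the vertex after `x i` is `x (finRotate L i)`. -/
def closedTrails (V : Finset ℕ) (S : Finset (Finset ℕ)) (L : ℕ) :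
    Finset ((Fin L → ℕ) × (Fin L → Finset ℕ)) :=
  {w ∈ Fintype.piFinset (fun _ => V) ×ˢ Fintype.piFinset (fun _ => S) |
    Function.Injective w.2 ∧
      ∀ i, w.1 i ∈ w.2 i ∧ w.1 (finRotate L i) ∈ w.2 i ∧ w.1 i ≠ w.1 (finRotate L i)}

variable {V : Finset ℕ} {S T : Finset (Finset ℕ)} {L : ℕ}

lemma mem_closedTrails {w : (Fin L → ℕ) × (Fin L → Finset ℕ)} :
    w ∈ closedTrails V S L ↔ (∀ i, w.1 i ∈ V) ∧ (∀ i, w.2 i ∈ S) ∧ Function.Injective w.2 ∧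
      ∀ i, w.1 i ∈ w.2 i ∧ w.1 (finRotate L i) ∈ w.2 i ∧ w.1 i ≠ w.1 (finRotate L i) := by
  simp only [closedTrails, mem_filter, mem_product, Fintype.mem_piFinset, and_assoc]

lemma closedTrails_mono (h : S ⊆ T) : closedTrails V S L ⊆ closedTrails V T L := by
  intro w hw
  rw [mem_closedTrails] at hw ⊢
  exact ⟨hw.1, fun i => h (hw.2.1 i), hw.2.2⟩

lemma closedTrails_eq_filter (h : S ⊆ T) :
    closedTrails V S L = {w ∈ closedTrails V T L | univ.image w.2 ⊆ S} := by
  ext w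
  simp only [mem_filter, mem_closedTrails, image_subset_iff, mem_univ, forall_const]
  exact ⟨fun hw => ⟨⟨hw.1, fun i => h (hw.2.1 i), hw.2.2⟩, hw.2.1⟩,
    fun hw => ⟨hw.1.1, hw.2, hw.1.2.2⟩⟩

lemma card_image_edges_of_mem_closedTrails {w : (Fin L → ℕ) × (Fin L → Finset ℕ)}
    (hw : w ∈ closedTrails V S L) : #(univ.image w.2) = L := by
  rw [card_image_of_injective _ (mem_closedTrails.1 hw).2.2.1, card_univ, Fintype.card_fin]

/-- An `r`-edge through two given distinct vertices is determined by the remaining `r - 2`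
vertices, so each step of a trail offers at most `|V| ^ (r - 1)` choices. -/
lemma card_closedTrails_le {r : ℕ} (hr : 2 ≤ r) (V : Finset ℕ) (L : ℕ) :
    #(closedTrails V (powersetCard r V) L) ≤ (#V ^ (r - 1)) ^ L := by
  let code : (Fin L → ℕ) × (Fin L → Finset ℕ) → (Fin L → ℕ) × (Fin L → Finset ℕ) :=
    fun w => (w.1, fun i => ((w.2 i).erase (w.1 i)).erase (w.1 (finRotate L i)))
  have hmaps : ∀ w ∈ closedTrails V (powersetCard r V) L, code w ∈
      Fintype.piFinset (fun _ => V) ×ˢ Fintype.piFinset (fun _ => powersetCard (r - 2) V) := by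
    intro w hw
    obtain ⟨hV, hS, -, hinc⟩ := mem_closedTrails.1 hw
    refine mem_product.2 ⟨Fintype.mem_piFinset.2 hV, Fintype.mem_piFinset.2 fun i => ?_⟩
    obtain ⟨h₀, h₁, hne⟩ := hinc i
    obtain ⟨hsub, hcard⟩ := mem_powersetCard.1 (hS i)
    refine mem_powersetCard.2 ⟨(erase_subset _ _).trans ((erase_subset _ _).trans hsub), ?_⟩
    rw [card_erase_of_mem (mem_erase.2 ⟨hne.symm, h₁⟩), card_erase_of_mem h₀, hcard]
    omega
  have hinj : Set.InjOn code (closedTrails V (powersetCard r V) L) := by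
    intro w hw w' hw' h
    obtain ⟨-, -, -, hinc⟩ := mem_closedTrails.1 hw
    obtain ⟨-, -, -, hinc'⟩ := mem_closedTrails.1 hw'
    obtain ⟨hx, he⟩ := Prod.mk.inj h
    refine Prod.ext hx (funext fun i => ?_)
    obtain ⟨h₀, h₁, hne⟩ := hinc i
    obtain ⟨h₀', h₁', hne'⟩ := hinc' i
    rw [← insert_erase h₀, ← insert_erase (mem_erase.2 ⟨hne.symm, h₁⟩), ← insert_erase h₀',
      ← insert_erase (mem_erase.2 ⟨hne'.symm, h₁'⟩), congrFun he i, hx]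
  calc #(closedTrails V (powersetCard r V) L)
      ≤ #(Fintype.piFinset (fun _ : Fin L => V) ×ˢ
          Fintype.piFinset (fun _ : Fin L => powersetCard (r - 2) V)) :=
        card_le_card_of_injOn code hmaps hinj
    _ = (#V * (#V).choose (r - 2)) ^ L := by
        simp [card_product, Fintype.card_piFinset, mul_pow]
    _ ≤ (#V * #V ^ (r - 2)) ^ L := by gcongr; exact Nat.choose_le_pow _ _
    _ = (#V ^ (r - 1)) ^ L := by rw [← pow_succ']; congr 2; omega

end ClosedTrails

section ClosedWalks

/-- The conditions of `FinHypergraph.HasCycleOfLength`, with hyperedges from `S`. -/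
def IsClosedWalk (S : Finset (Finset ℕ)) (L : ℕ) (x : ℕ → ℕ) (e : ℕ → Finset ℕ) : Prop :=
  (∀ i < L, e i ∈ S) ∧ (∀ i < L, x i ≠ x (i + 1)) ∧ (∀ i < L, x i ∈ e i ∧ x (i + 1) ∈ e i) ∧
    (∀ i, i + 1 < L → e i ≠ e (i + 1)) ∧ x 0 = x L

variable {S : Finset (Finset ℕ)} {L : ℕ} {x : ℕ → ℕ} {e : ℕ → Finset ℕ}

/-- The closed walk `v, e a, x (a + 1), …, e (a + M - 1), x (a + M) = v`. -/
lemma IsClosedWalk.segment (h : IsClosedWalk S L x e) {a M : ℕ} (hM : a + M ≤ L) {v : ℕ}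
    (hv : v ∈ e a) (hv₁ : v ≠ x (a + 1)) (hvM : v = x (a + M)) :
    IsClosedWalk S M (Function.update (fun i => x (a + i)) 0 v) (fun i => e (a + i)) := by
  obtain ⟨hS, hne, hinc, hee, -⟩ := h
  refine ⟨fun i hi => hS _ (by omega), fun i hi => ?_, fun i hi => ?_, fun i hi => ?_, ?_⟩
  · rcases i.eq_zero_or_pos with rfl | hi₀
    · simpa using hv₁
    · simpa [Function.update, hi₀.ne', ← add_assoc] using hne (a + i) (by omega)
  · rcases i.eq_zero_or_pos with rfl | hi₀
    · simpa using ⟨hv, (hinc a (by omega)).2⟩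
    · simpa [Function.update, hi₀.ne', ← add_assoc] using hinc (a + i) (by omega)
  · simpa [← add_assoc] using hee (a + i) (by omega)
  · rcases M.eq_zero_or_pos with rfl | hM₀
    · rfl
    · simpa [Function.update, hM₀.ne'] using hvM

/-- A repeated hyperedge `e a = e b` splits off the shorter closed walk through `e (a+1), …,
e b`, or, if `x (a+1) = x b`, through `e (a+1), …, e (b-1)`. -/
lemma IsClosedWalk.exists_shorter_of_edge_eq (h : IsClosedWalk S L x e) {a b : ℕ} (hab : a < b)
    (hbL : b < L) (heq : e a = e b) :
    ∃ M, 2 ≤ M ∧ M < L ∧ ∃ y f, IsClosedWalk S M y f := by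
  have hb : a + 1 < b := by
    by_contra! hb
    exact h.2.2.2.1 a (by omega) (by rwa [show a + 1 = b by omega])
  by_cases hx : x b = x (a + 1)
  · have hb' : a + 2 < b := by
      by_contra! hb'
      exact h.2.1 (a + 1) (by omega) (by rw [← hx, show a + 1 + 1 = b by omega])
    exact ⟨b - (a + 1), by omega, by omega, _, _,
      h.segment (a := a + 1) (by omega) (h.2.2.1 _ (by omega)).1 (h.2.1 _ (by omega))
        (by rw [← hx]; congr 1; omega)⟩
  · exact ⟨b - a, by omega, by omega, _, _,
      h.segment (by omega) (heq ▸ (h.2.2.1 b hbL).1) hx (by congr 1; omega)⟩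

lemma IsClosedWalk.mk_mem_closedTrails {V : Finset ℕ} (h : IsClosedWalk S L x e)
    (hSV : ∀ E ∈ S, E ⊆ V) (hinj : ∀ a b, a < b → b < L → e a ≠ e b) :
    ((fun i : Fin L => x i), (fun i : Fin L => e i)) ∈ closedTrails V S L := by
  obtain ⟨hS, hne, hinc, -, hclosed⟩ := h
  have hnext : ∀ i : Fin L, x (finRotate L i) = x (i + 1) := by
    intro i
    obtain ⟨n, rfl⟩ : ∃ n, L = n + 1 := ⟨L - 1, by have := i.pos; omega⟩
    rw [coe_finRotate]
    split_ifs with hlast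
    · rw [hclosed, hlast, Fin.val_last]
    · rfl
  have hinj' : Function.Injective fun i : Fin L => e i := by
    intro i j hij
    rcases lt_trichotomy i j with hlt | rfl | hgt
    · exact absurd hij (hinj i j hlt j.2)
    · rfl
    · exact absurd hij.symm (hinj j i hgt i.2)
  refine mem_closedTrails.2 ⟨fun i => hSV _ (hS i i.2) (hinc i i.2).1, fun i => hS i i.2, hinj',
    fun i => ?_⟩
  simp only [hnext]
  exact ⟨(hinc i i.2).1, (hinc i i.2).2, hne i i.2⟩

/-- A shortest closed walk has no repeated hyperedge. -/
lemma exists_closedTrails_nonempty {V : Finset ℕ} (hSV : ∀ E ∈ S, E ⊆ V) (hL : 2 ≤ L)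
    (h : IsClosedWalk S L x e) :
    ∃ M, 2 ≤ M ∧ M ≤ L ∧ (closedTrails V S M).Nonempty := by
  classical
  have hex : ∃ M, 2 ≤ M ∧ ∃ y f, IsClosedWalk S M y f := ⟨L, hL, x, e, h⟩
  obtain ⟨hM, y, f, hyf⟩ := Nat.find_spec hex
  refine ⟨Nat.find hex, hM, Nat.find_min' hex ⟨hL, x, e, h⟩, _, hyf.mk_mem_closedTrails hSV ?_⟩
  intro a b hab hb heq
  obtain ⟨M', hM', hlt, hwalk⟩ := hyf.exists_shorter_of_edge_eq hab hb heq
  exact Nat.find_min hex hlt ⟨hM', hwalk⟩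

end ClosedWalks

lemma sum_binomialWeight_mul_card_closedTrails (V : Finset ℕ) (K : Finset (Finset ℕ)) (p : ℝ)
    (L : ℕ) :
    ∑ S ∈ K.powerset, binomialWeight K p S * #(closedTrails V S L) =
      #(closedTrails V K L) * p ^ L := by
  calc ∑ S ∈ K.powerset, binomialWeight K p S * #(closedTrails V S L)
      = ∑ S ∈ K.powerset, binomialWeight K p S *
          #{w ∈ closedTrails V K L | univ.image w.2 ⊆ S} := by
        refine sum_congr rfl fun S hS => ?_
        rw [closedTrails_eq_filter (mem_powerset.1 hS)]
    _ = ∑ w ∈ closedTrails V K L, p ^ #(univ.image w.2) :=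
        sum_binomialWeight_mul_card_filter K p _ _
          fun w hw => image_subset_iff.2 fun i _ => (mem_closedTrails.1 hw).2.1 i
    _ = #(closedTrails V K L) * p ^ L := by
        rw [sum_congr rfl fun w hw => by rw [card_image_edges_of_mem_closedTrails hw]]
        simp

/-- The first-moment method for a `p`-random subset of `K`. -/
lemma exists_subset_le_card_sub_sum_card_closedTrails (V : Finset ℕ) (K : Finset (Finset ℕ))
    {p : ℝ} (hp₀ : 0 < p) (hp₁ : p < 1) (I : Finset ℕ) (ℓ : ℕ → ℕ) :
    ∃ S ⊆ K, #K * p - ∑ i ∈ I, #(closedTrails V K (ℓ i)) * p ^ ℓ i ≤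
      #S - ∑ i ∈ I, (#(closedTrails V S (ℓ i)) : ℝ) := by
  refine exists_le_of_le_sum_binomialWeight_mul hp₀ hp₁ _ (le_of_eq ?_)
  simp_rw [mul_sub, sum_sub_distrib, mul_sum, sum_binomialWeight_mul_card]
  rw [sum_comm]
  simp_rw [sum_binomialWeight_mul_card_closedTrails]

/-- Deleting one hyperedge from every closed trail of length less than `k + 2`. -/
lemma exists_girthGE_of_subset_powersetCard {r : ℕ} {V : Finset ℕ} {S : Finset (Finset ℕ)}
    (hS : S ⊆ powersetCard r V) (k : ℕ) :
    ∃ G : FinHypergraph r, G.verts = V ∧ G.GirthGE (k + 2) ∧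
      #S ≤ #G.edges + ∑ i ∈ range k, #(closedTrails V S (i + 2)) := by
  set D := (range k).biUnion fun i => (closedTrails V S (i + 2)).image fun w => w.2 0
  have hSD : ∀ E ∈ S \ D, E ∈ powersetCard r V := fun E hE => hS (mem_sdiff.1 hE).1
  refine ⟨⟨V, S \ D, fun E hE => (mem_powersetCard.1 (hSD E hE)).2,
    fun E hE => (mem_powersetCard.1 (hSD E hE)).1⟩, rfl, ?_, ?_⟩
  · rintro L ⟨hL, x, e, hwalk⟩
    by_contra! hLk
    obtain ⟨M, hM, hML, w, hw⟩ := exists_closedTrails_nonempty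
      (fun E hE => (mem_powersetCard.1 (hSD E hE)).1) hL hwalk
    obtain ⟨i, rfl⟩ : ∃ i, M = i + 2 := ⟨M - 2, by omega⟩
    have hD : w.2 0 ∈ D := mem_biUnion.2 ⟨i, mem_range.2 (by omega),
      mem_image_of_mem _ (closedTrails_mono sdiff_subset hw)⟩
    exact (mem_sdiff.1 ((mem_closedTrails.1 hw).2.1 0)).2 hD
  · calc #S ≤ #(S \ D) + #D := card_le_card_sdiff_add_card
      _ ≤ #(S \ D) + ∑ i ∈ range k, #(closedTrails V S (i + 2)) := by
        gcongr
        exact card_biUnion_le.trans (sum_le_sum fun i _ => card_image_le)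

open Nat in
lemma pow_le_mul_choose {r n : ℕ} (hrn : r ≤ n) : n ^ r ≤ r ^ r * r ! * n.choose r := by
  rcases r.eq_zero_or_pos with rfl | hr
  · simp
  have hn : n ≤ r * (n + 1 - r) := by
    obtain ⟨k, rfl⟩ := Nat.exists_eq_add_of_le hrn
    rw [show r + k + 1 - r = k + 1 by omega, mul_add_one]
    nlinarith [Nat.le_mul_of_pos_left k hr]
  calc n ^ r ≤ (r * (n + 1 - r)) ^ r := Nat.pow_le_pow_left hn r
    _ = r ^ r * (n + 1 - r) ^ r := mul_pow _ _ _
    _ ≤ r ^ r * n.descFactorial r := Nat.mul_le_mul_left _ (n.pow_sub_le_descFactorial r)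
    _ = r ^ r * r ! * n.choose r := by rw [descFactorial_eq_factorial_mul_choose, mul_assoc]

open Nat in
lemma div_mul_rpow_le_card_powersetCard_mul {r n : ℕ} (hr : 1 ≤ r) (hrn : r ≤ n) (m : ℕ)
    {c : ℝ} (hc : 0 ≤ c) :
    c / (r ^ r * r !) * n ^ (1 + 1 / m : ℝ) ≤
      #(powersetCard r (range n)) * (c * n ^ (1 / m : ℝ) / n ^ (r - 1)) := by
  have hn : (0 : ℝ) < n := by exact_mod_cast (by omega : 0 < n)
  have hchoose : (n : ℝ) ^ r ≤ r ^ r * r ! * n.choose r := by exact_mod_cast pow_le_mul_choose hrn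
  have hpow : (n : ℝ) ^ (1 + 1 / m : ℝ) = n ^ r / n ^ (r - 1) * n ^ (1 / m : ℝ) := by
    rw [Real.rpow_add hn, Real.rpow_one, ← pow_sub_one_mul (by omega : r ≠ 0) (n : ℝ),
      mul_div_cancel_left₀ _ (by positivity)]
  rw [card_powersetCard, card_range, hpow, div_mul_eq_mul_div, div_le_iff₀ (by positivity)]
  calc c * (n ^ r / n ^ (r - 1) * n ^ (1 / m : ℝ))
      = n ^ r * (c * n ^ (1 / m : ℝ) / n ^ (r - 1)) := by ring
    _ ≤ r ^ r * r ! * n.choose r * (c * n ^ (1 / m : ℝ) / n ^ (r - 1)) := by gcongr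
    _ = _ := by ring

lemma sum_card_closedTrails_mul_pow_le {r n : ℕ} (hr : 2 ≤ r) (hn : 1 ≤ n) (m : ℕ) {c : ℝ}
    (hc₀ : 0 ≤ c) (hc₁ : c ≤ 1) :
    ∑ i ∈ range m, #(closedTrails (range n) (powersetCard r (range n)) (i + 2)) *
        (c * n ^ (1 / m : ℝ) / n ^ (r - 1)) ^ (i + 2) ≤ m * c ^ 2 * n ^ (1 + 1 / m : ℝ) := by
  have hn : (1 : ℝ) ≤ n := by exact_mod_cast hn
  have hterm : ∀ i ∈ range m,
      (#(closedTrails (range n) (powersetCard r (range n)) (i + 2)) : ℝ) *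
        (c * n ^ (1 / m : ℝ) / n ^ (r - 1)) ^ (i + 2) ≤ c ^ 2 * n ^ (1 + 1 / m : ℝ) := by
    intro i hi
    have him := mem_range.1 hi
    have hm : (m : ℝ) ≠ 0 := Nat.cast_ne_zero.2 (by omega)
    calc (#(closedTrails (range n) (powersetCard r (range n)) (i + 2)) : ℝ) *
          (c * n ^ (1 / m : ℝ) / n ^ (r - 1)) ^ (i + 2)
        ≤ ((n : ℝ) ^ (r - 1)) ^ (i + 2) * (c * n ^ (1 / m : ℝ) / n ^ (r - 1)) ^ (i + 2) := by
          refine mul_le_mul_of_nonneg_right ?_ (by positivity)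
          have hcard := card_closedTrails_le hr (range n) (i + 2)
          rw [card_range] at hcard
          exact_mod_cast hcard
      _ = c ^ (i + 2) * (n ^ (1 / m : ℝ)) ^ (i + 2) := by
          rw [← mul_pow, mul_div_cancel₀ _ (by positivity), mul_pow]
      _ ≤ c ^ 2 * (n ^ (1 / m : ℝ)) ^ (m + 1) := by
          refine mul_le_mul (pow_le_pow_of_le_one hc₀ hc₁ (by omega)) ?_ (by positivity)
            (by positivity)
          exact pow_le_pow_right₀ (Real.one_le_rpow hn (by positivity)) (by omega)
      _ = c ^ 2 * n ^ (1 + 1 / m : ℝ) := by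
          rw [← Real.rpow_natCast (_ ^ _), ← Real.rpow_mul (by positivity)]
          congr 2
          push_cast
          field_simp
  calc _ ≤ ∑ _i ∈ range m, c ^ 2 * (n : ℝ) ^ (1 + 1 / m : ℝ) := sum_le_sum hterm
    _ = m * c ^ 2 * n ^ (1 + 1 / m : ℝ) := by rw [sum_const, card_range, nsmul_eq_mul, mul_assoc]

open Nat in
lemma exists_pos_rpow_le_card_mul_sub_sum {r m : ℕ} (hr : 2 ≤ r) (hm : m ≠ 0) :
    ∃ C : ℝ, 0 < C ∧ ∀ n, r ≤ n → ∃ p : ℝ, 0 < p ∧ p < 1 ∧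
      C * n ^ (1 + 1 / m : ℝ) ≤ #(powersetCard r (range n)) * p -
        ∑ i ∈ range m,
          #(closedTrails (range n) (powersetCard r (range n)) (i + 2)) * p ^ (i + 2) := by
  have hm₁ : (1 : ℝ) ≤ m := by exact_mod_cast Nat.one_le_iff_ne_zero.2 hm
  have hK : (1 : ℝ) ≤ r ^ r * r ! := one_le_mul_of_one_le_of_one_le
    (one_le_pow₀ (by exact_mod_cast (by omega : 1 ≤ r))) (by exact_mod_cast r.factorial_pos)
  set K : ℝ := r ^ r * (r ! : ℝ)
  set c : ℝ := 1 / (2 * m * K)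
  have hc₀ : 0 < c := by positivity
  have hc₁ : c < 1 := by rw [div_lt_one (by positivity)]; nlinarith
  have hmc : m * c = 1 / (2 * K) := by simp only [c]; field_simp
  refine ⟨c / (2 * K), by positivity, fun n hrn => ?_⟩
  have hn : (1 : ℝ) ≤ n := by exact_mod_cast (by omega : 1 ≤ n)
  refine ⟨c * n ^ (1 / m : ℝ) / n ^ (r - 1), by positivity, ?_, ?_⟩
  · rw [div_lt_one (by positivity)]
    calc c * n ^ (1 / m : ℝ) < n ^ (1 / m : ℝ) := mul_lt_of_lt_one_left (by positivity) hc₁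
      _ ≤ n ^ (1 : ℝ) := Real.rpow_le_rpow_of_exponent_le hn (div_le_one_of_le₀ hm₁ (by positivity))
      _ ≤ n ^ (r - 1) := by rw [Real.rpow_one]; exact le_self_pow₀ hn (by omega)
  · calc c / (2 * K) * (n : ℝ) ^ (1 + 1 / m : ℝ)
        = c / K * n ^ (1 + 1 / m : ℝ) - m * c ^ 2 * n ^ (1 + 1 / m : ℝ) := by
          rw [show (m : ℝ) * c ^ 2 = m * c * c by ring, hmc]
          field_simp
          ring
      _ ≤ _ := sub_le_sub (div_mul_rpow_le_card_powersetCard_mul (by omega) hrn m hc₀.le)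
          (sum_card_closedTrails_mul_pow_le hr (by omega) m hc₀.le hc₁.le)

/-- Dense hypergraphs of large girth: for `r ≥ 2` and `g ≥ 3` there is a constant
`C = C(r,g) > 0` such that for all `n ≥ r` there is an `r`-uniform hypergraph on
`n` vertices with at least `C·n^((g-1)/(g-2))` hyperedges and girth at least `g`. -/
theorem uniqueErgodicity.stmt8 (r g : ℕ) (hr : 2 ≤ r) (hg : 3 ≤ g) :
    ∃ C : ℝ, 0 < C ∧ ∀ n : ℕ, r ≤ n →
      ∃ G : FinHypergraph r, G.verts.card = n ∧
        C * (n : ℝ) ^ (((g : ℝ) - 1) / ((g : ℝ) - 2)) ≤ (G.edges.card : ℝ) ∧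
        G.GirthGE g := by
  obtain ⟨m, rfl⟩ : ∃ m, g = m + 2 := ⟨g - 2, by omega⟩
  obtain ⟨C, hC, hsurplus⟩ := exists_pos_rpow_le_card_mul_sub_sum hr (by omega : m ≠ 0)
  refine ⟨C, hC, fun n hrn => ?_⟩
  obtain ⟨p, hp₀, hp₁, hp⟩ := hsurplus n hrn
  obtain ⟨S, hSK, hS⟩ := exists_subset_le_card_sub_sum_card_closedTrails (range n)
    (powersetCard r (range n)) hp₀ hp₁ (range m) (· + 2)
  obtain ⟨G, hGV, hgirth, hcard⟩ := exists_girthGE_of_subset_powersetCard hSK m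
  refine ⟨G, by rw [hGV, card_range], ?_, hgirth⟩
  have hexp : (((m + 2 : ℕ) : ℝ) - 1) / (((m + 2 : ℕ) : ℝ) - 2) = 1 + 1 / m := by
    have hm : (m : ℝ) ≠ 0 := Nat.cast_ne_zero.2 (by omega)
    push_cast
    rw [show (m : ℝ) + 2 - 2 = m by ring]
    field_simp
    ring
  calc C * (n : ℝ) ^ ((((m + 2 : ℕ) : ℝ) - 1) / (((m + 2 : ℕ) : ℝ) - 2))
      ≤ #S - ∑ i ∈ range m, (#(closedTrails (range n) S (i + 2)) : ℝ) := hexp ▸ hp.trans hS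
    _ ≤ #G.edges := by
        rw [sub_le_iff_le_add]
        exact_mod_cast hcard
end

section
/- Let Z_1, Z_2, Z_3 be independent standard normal random variables and define f(ε) := P(Z_1 < (1−ε)·Z_2 and (1−ε)·Z_2 < Z_3). Then f is differentiable at 0 with f'(0) = 1/(2π·√3). -/
/-!
Conditioning on `Z₂ = y`, the probability equals `E[Φ(cY) (1 - Φ(cY))]` with `c = 1 - ε`, `Y`
standard normal and `Φ` its distribution function. Differentiating under the integral at `c = 1`
gives `E[Y g(Y)]` with `g = φ (1 - 2Φ)`. Gaussian integration by parts `E[Y g(Y)] = E[g'(Y)]`,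
with `g'(y) = -y g(y) - 2 φ(y)²`, turns this into `-E[φ(Y)²] = -∫ φ³ = -1/(2π√3)`, and the inner
derivative of `c = 1 - ε` flips the sign.
-/

open MeasureTheory ProbabilityTheory Real Set Filter Topology

theorem measure_prod_prod_lt_lt {β : Type*} [MeasurableSpace β] (μ κ : Measure ℝ)
    (ν : Measure β) [SFinite μ] [SFinite ν] [SFinite κ] {g : β → ℝ} (hg : Measurable g) :
    μ.prod (ν.prod κ) {p : ℝ × β × ℝ | p.1 < g p.2.1 ∧ g p.2.1 < p.2.2} =
      ∫⁻ y, μ (Iio (g y)) * κ (Ioi (g y)) ∂ν := by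
  have hS : MeasurableSet {p : ℝ × β × ℝ | p.1 < g p.2.1 ∧ g p.2.1 < p.2.2} :=
    (measurableSet_lt measurable_fst (hg.comp measurable_snd.fst)).inter
      (measurableSet_lt (hg.comp measurable_snd.fst) measurable_snd.snd)
  rw [Measure.prod_apply_symm hS,
    lintegral_prod _ (measurable_measure_prodMk_right hS).aemeasurable]
  refine lintegral_congr fun y => ?_
  have hfiber : ∀ z, μ ((fun x => (x, y, z)) ⁻¹'
      {p : ℝ × β × ℝ | p.1 < g p.2.1 ∧ g p.2.1 < p.2.2}) =
      (Ioi (g y)).indicator (fun _ => μ (Iio (g y))) z := by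
    intro z
    by_cases hz : g y < z <;> simp [hz, Iio]
  simp_rw [hfiber, lintegral_indicator measurableSet_Ioi, setLIntegral_const]

theorem measureReal_prod_prod_lt_lt {β : Type*} [MeasurableSpace β] (μ κ : Measure ℝ)
    (ν : Measure β) [IsFiniteMeasure μ] [SFinite ν] [IsFiniteMeasure κ] {g : β → ℝ}
    (hg : Measurable g) :
    (μ.prod (ν.prod κ)).real {p : ℝ × β × ℝ | p.1 < g p.2.1 ∧ g p.2.1 < p.2.2} =
      ∫ y, μ.real (Iio (g y)) * κ.real (Ioi (g y)) ∂ν := by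
  have hIio : Measurable fun t => μ (Iio t) :=
    Monotone.measurable fun _ _ h => measure_mono (Iio_subset_Iio h)
  have hIoi : Measurable fun t => κ (Ioi t) :=
    Antitone.measurable fun _ _ h => measure_mono (Ioi_subset_Ioi h)
  rw [measureReal_def, measure_prod_prod_lt_lt μ κ ν hg, ← integral_toReal]
  · simp [measureReal_def]
  · exact ((hIio.comp hg).mul (hIoi.comp hg)).aemeasurable
  · exact ae_of_all _ fun y => ENNReal.mul_lt_top (measure_lt_top _ _) (measure_lt_top _ _)

theorem measureReal_Iio_eq_cdf (μ : Measure ℝ) [IsProbabilityMeasure μ] [NullSingletonClass μ]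
    (t : ℝ) : μ.real (Iio t) = cdf μ t := by
  rw [cdf_eq_real, measureReal_congr Iio_ae_eq_Iic]

theorem measureReal_Ioi_eq_one_sub_cdf (μ : Measure ℝ) [IsProbabilityMeasure μ] (t : ℝ) :
    μ.real (Ioi t) = 1 - cdf μ t := by
  rw [cdf_eq_real, ← compl_Iic, probReal_compl_eq_one_sub measurableSet_Iic]

theorem abs_cdf_mul_one_sub_cdf_le (μ : Measure ℝ) (t : ℝ) : |cdf μ t * (1 - cdf μ t)| ≤ 1 := by
  have h₀ := cdf_nonneg μ t
  have h₁ := cdf_le_one μ t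
  rw [abs_le]
  constructor <;> nlinarith

theorem abs_one_sub_two_mul_cdf_le (μ : Measure ℝ) (t : ℝ) : |1 - 2 * cdf μ t| ≤ 1 :=
  abs_le.2 ⟨by linarith [cdf_le_one μ t], by linarith [cdf_nonneg μ t]⟩

theorem hasDerivAt_integral_comp_mul {μ : Measure ℝ} {h h' : ℝ → ℝ} {C c : ℝ}
    (hh : ∀ t, HasDerivAt h (h' t) t) (hC : ∀ t, |h' t| ≤ C)
    (hint : Integrable (fun y => h (c * y)) μ) (hid : Integrable id μ) :
    HasDerivAt (fun a => ∫ y, h (a * y) ∂μ) (∫ y, y * h' (c * y) ∂μ) c := by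
  have hcont : Continuous h := continuous_iff_continuousAt.2 fun t => (hh t).continuousAt
  have hmeas : Measurable h' := by
    rw [show h' = deriv h from funext fun t => (hh t).deriv.symm]
    exact measurable_deriv h
  refine (hasDerivAt_integral_of_dominated_loc_of_deriv_le (bound := fun y => C * |y|)
    (F' := fun a y => y * h' (a * y)) univ_mem
    (Eventually.of_forall fun a => (hcont.comp (continuous_const_mul a)).aestronglyMeasurable)
    hint (by fun_prop : Measurable fun y => y * h' (c * y)).aestronglyMeasurable
    (ae_of_all _ fun y a _ => ?_) (hid.abs.const_mul C) (ae_of_all _ fun y a _ => ?_)).2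
  · rw [Real.norm_eq_abs, abs_mul, mul_comm]
    exact mul_le_mul_of_nonneg_right (hC _) (abs_nonneg y)
  · exact ((hh (a * y)).comp a ((hasDerivAt_id a).mul_const y)).congr_deriv (by simp [mul_comm])

theorem integrable_gaussianReal_iff {E : Type*} [NormedAddCommGroup E] [NormedSpace ℝ E]
    {μ : ℝ} {v : NNReal} (hv : v ≠ 0) {f : ℝ → E} :
    Integrable f (gaussianReal μ v) ↔ Integrable (fun x => gaussianPDFReal μ v x • f x) := by
  rw [gaussianReal_of_var_ne_zero μ hv, integrable_withDensity_iff_integrable_smul'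
    (measurable_gaussianPDF μ v) (ae_of_all _ fun _ => gaussianPDF_lt_top)]
  simp only [toReal_gaussianPDF]

local notation "φ" => gaussianPDFReal 0 1

local notation "Φ" => cdf (gaussianReal 0 1)

theorem gaussianPDFReal_zero_one_eq : φ = fun x => (√(2 * π))⁻¹ * rexp (-x ^ 2 / 2) := by
  ext x
  simp [gaussianPDFReal]

theorem gaussianPDFReal_zero_one_le (x : ℝ) : φ x ≤ (√(2 * π))⁻¹ := by
  rw [gaussianPDFReal_zero_one_eq]
  refine mul_le_of_le_one_right (by positivity) (exp_le_one_iff.2 ?_)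
  nlinarith [sq_nonneg x]

theorem hasDerivAt_gaussianPDFReal_zero_one (x : ℝ) : HasDerivAt φ (-x * φ x) x := by
  have hexponent : HasDerivAt (fun y : ℝ => -y ^ 2 / 2) (-x) x := by
    have hsq : HasDerivAt (fun y : ℝ => y ^ 2) (2 * x) x := by
      simpa using hasDerivAt_pow 2 x
    exact (hsq.neg.div_const 2).congr_deriv (by ring)
  rw [gaussianPDFReal_zero_one_eq]
  exact (hexponent.exp.const_mul _).congr_deriv (by ring)

theorem continuous_gaussianPDFReal_zero_one : Continuous φ :=
  continuous_iff_continuousAt.2 fun x => (hasDerivAt_gaussianPDFReal_zero_one x).continuousAt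

theorem hasDerivAt_cdf_gaussianReal (t : ℝ) : HasDerivAt Φ (φ t) t := by
  have hφ := integrable_gaussianPDFReal 0 1
  have hΦ : Φ = fun u => Φ 0 + ∫ x in (0 : ℝ)..u, φ x := by
    ext u
    simp only [cdf_eq_real, measureReal_def, gaussianReal_apply_eq_integral 0 one_ne_zero,
      ENNReal.toReal_ofReal (setIntegral_nonneg measurableSet_Iic
        fun x _ => gaussianPDFReal_nonneg 0 1 x)]
    rw [← intervalIntegral.integral_Iic_sub_Iic hφ.integrableOn hφ.integrableOn]
    ring
  rw [hΦ]
  exact (intervalIntegral.integral_hasDerivAt_right hφ.intervalIntegrable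
    (stronglyMeasurable_gaussianPDFReal 0 1).stronglyMeasurableAtFilter
    continuous_gaussianPDFReal_zero_one.continuousAt).const_add _

theorem continuous_cdf_gaussianReal : Continuous Φ :=
  continuous_iff_continuousAt.2 fun t => (hasDerivAt_cdf_gaussianReal t).continuousAt

theorem abs_gaussianPDFReal_mul_one_sub_two_cdf_le (x : ℝ) :
    |φ x * (1 - 2 * Φ x)| ≤ (√(2 * π))⁻¹ := by
  rw [abs_mul, abs_of_nonneg (gaussianPDFReal_nonneg 0 1 x)]
  exact (mul_le_of_le_one_right (gaussianPDFReal_nonneg 0 1 x)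
    (abs_one_sub_two_mul_cdf_le _ x)).trans (gaussianPDFReal_zero_one_le x)

theorem integral_mul_eq_integral_deriv_gaussianReal {g g' : ℝ → ℝ}
    (hg : ∀ x, HasDerivAt g (g' x) x) (hg_int : Integrable g (gaussianReal 0 1))
    (hxg : Integrable (fun x => x * g x) (gaussianReal 0 1))
    (hg' : Integrable g' (gaussianReal 0 1)) :
    ∫ x, x * g x ∂gaussianReal 0 1 = ∫ x, g' x ∂gaussianReal 0 1 := by
  rw [integrable_gaussianReal_iff one_ne_zero] at hg_int hxg hg'
  simp only [integral_gaussianReal_eq_integral_smul one_ne_zero, smul_eq_mul] at *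
  have hparts := integral_mul_deriv_eq_deriv_mul_of_integrable (u := g) (v := φ)
    (fun x _ => hg x) (fun x _ => hasDerivAt_gaussianPDFReal_zero_one x)
    (hxg.neg.congr (ae_of_all _ fun x => by simp only [Pi.mul_apply, Pi.neg_apply]; ring))
    (hg'.congr (ae_of_all _ fun x => mul_comm _ _))
    (hg_int.congr (ae_of_all _ fun x => mul_comm _ _))
  calc ∫ x, φ x * (x * g x) = -∫ x, g x * (-x * φ x) := by
        rw [← integral_neg]; congr with x; ring
    _ = ∫ x, φ x * g' x := by
        rw [hparts, neg_neg]; simp_rw [mul_comm]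

theorem integral_gaussianPDFReal_zero_one_pow_three : ∫ x, φ x ^ 3 = 1 / (2 * π * √3) := by
  have hcube : (fun x => φ x ^ 3) = fun x => (√(2 * π))⁻¹ ^ 3 * rexp (-(3 / 2) * x ^ 2) := by
    ext x
    rw [gaussianPDFReal_zero_one_eq, mul_pow, ← exp_nat_mul]
    ring_nf
  rw [hcube, integral_const_mul, integral_gaussian, show π / (3 / 2) = 2 * π / 3 by ring,
    sqrt_div' _ (by norm_num : (0:ℝ) ≤ 3)]
  field_simp
  exact (sq_sqrt (by positivity)).symm

theorem integral_mul_gaussianPDFReal_mul_one_sub_two_cdf :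
    ∫ x, x * (φ x * (1 - 2 * Φ x)) ∂gaussianReal 0 1 = -∫ x, φ x ^ 3 := by
  set g : ℝ → ℝ := fun x => φ x * (1 - 2 * Φ x)
  have hg : ∀ x, HasDerivAt g (-(x * g x) - 2 * φ x ^ 2) x := fun x =>
    ((hasDerivAt_gaussianPDFReal_zero_one x).mul
      (((hasDerivAt_cdf_gaussianReal x).const_mul 2).const_sub 1)).congr_deriv (by ring)
  have hg_meas : AEStronglyMeasurable g (gaussianReal 0 1) :=
    (continuous_iff_continuousAt.2 fun x => (hg x).continuousAt).aestronglyMeasurable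
  have hg_le : ∀ x, ‖g x‖ ≤ (√(2 * π))⁻¹ := abs_gaussianPDFReal_mul_one_sub_two_cdf_le
  have hxg : Integrable (fun x => x * g x) (gaussianReal 0 1) :=
    IsGaussian.integrable_id.mul_bdd hg_meas (ae_of_all _ hg_le)
  have hφ_sq : Integrable (fun x => φ x ^ 2) (gaussianReal 0 1) := by
    refine Integrable.of_bound (by fun_prop) ((√(2 * π))⁻¹ ^ 2) (ae_of_all _ fun x => ?_)
    rw [norm_pow, Real.norm_of_nonneg (gaussianPDFReal_nonneg 0 1 x)]
    exact pow_le_pow_left₀ (gaussianPDFReal_nonneg 0 1 x) (gaussianPDFReal_zero_one_le x) 2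
  have hstein := integral_mul_eq_integral_deriv_gaussianReal hg
    (Integrable.of_bound hg_meas _ (ae_of_all _ hg_le)) hxg (hxg.fun_neg.sub (hφ_sq.const_mul 2))
  have hφ_sq_eq : ∫ x, φ x ^ 2 ∂gaussianReal 0 1 = ∫ x, φ x ^ 3 := by
    simp only [integral_gaussianReal_eq_integral_smul one_ne_zero, smul_eq_mul, ← pow_succ']
  rw [integral_sub hxg.fun_neg (hφ_sq.const_mul 2), integral_neg, integral_const_mul,
    hφ_sq_eq] at hstein
  linarith

/-- For independent standard normals `Z₁, Z₂, Z₃`, the function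
`f(ε) := P(Z₁ < (1−ε)·Z₂ ∧ (1−ε)·Z₂ < Z₃)` is differentiable at `0` with
derivative `1/(2π√3)`. -/
theorem uniqueErgodicity.stmt15 :
    HasDerivAt
      (fun ε : ℝ =>
        (((gaussianReal 0 1).prod ((gaussianReal 0 1).prod (gaussianReal 0 1)))
          {p : ℝ × ℝ × ℝ | p.1 < (1 - ε) * p.2.1 ∧ (1 - ε) * p.2.1 < p.2.2}).toReal)
      (1 / (2 * Real.pi * Real.sqrt 3)) 0 := by
  have hprob : ∀ ε : ℝ,
      (((gaussianReal 0 1).prod ((gaussianReal 0 1).prod (gaussianReal 0 1)))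
        {p : ℝ × ℝ × ℝ | p.1 < (1 - ε) * p.2.1 ∧ (1 - ε) * p.2.1 < p.2.2}).toReal =
      ∫ y, Φ ((1 - ε) * y) * (1 - Φ ((1 - ε) * y)) ∂gaussianReal 0 1 := fun ε => by
    have := nullSingletonClass_gaussianReal (μ := 0) one_ne_zero
    rw [← measureReal_def, measureReal_prod_prod_lt_lt _ _ _ (measurable_const_mul _)]
    simp only [measureReal_Iio_eq_cdf, measureReal_Ioi_eq_one_sub_cdf]
  have hderiv : ∀ t, HasDerivAt (fun t => Φ t * (1 - Φ t)) (φ t * (1 - 2 * Φ t)) t := fun t =>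
    ((hasDerivAt_cdf_gaussianReal t).mul
      ((hasDerivAt_cdf_gaussianReal t).const_sub 1)).congr_deriv (by ring)
  have hint : Integrable (fun y => Φ (1 * y) * (1 - Φ (1 * y))) (gaussianReal 0 1) := by
    have hΦ := continuous_cdf_gaussianReal
    exact Integrable.of_bound (by fun_prop) 1
      (ae_of_all _ fun y => abs_cdf_mul_one_sub_cdf_le _ (1 * y))
  have hG := hasDerivAt_integral_comp_mul hderiv abs_gaussianPDFReal_mul_one_sub_two_cdf_le hint
    IsGaussian.integrable_id
  have hlin : HasDerivAt (fun ε : ℝ => 1 - ε) (-1) 0 := by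
    simpa using (hasDerivAt_id (0 : ℝ)).const_sub 1
  simp only [hprob]
  refine (hG.comp_of_eq 0 hlin (sub_zero 1).symm).congr_deriv ?_
  simp only [one_mul, integral_mul_gaussianPDFReal_mul_one_sub_two_cdf,
    integral_gaussianPDFReal_zero_one_pow_three]
  ring
end

section
/- Let G = ⟨V,E⟩ be a finite simple graph in which every vertex has degree at most D, where D ≥ 1 is an integer, and let a := D/(D+1). Define M to be the V×V real matrix with M_{xy} = 0 if x = y, M_{xy} = 1 if {x,y} ∈ E, and M_{xy} = a otherwise. Then M is conditionally negative semidefinite: for every vector v ∈ ℝ^V with Σ_{x∈V} v_x = 0, one has vᵀMv ≤ 0. -/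
/-!
Write `M = a J - a I + (1 - a) A` with `J` the all-ones matrix and `A` the adjacency matrix.
On vectors of zero sum the `J` term vanishes, and since the Laplacian `Deg - A` is positive
semidefinite, `vᵀ A v ≤ Σ deg(x) v_x² ≤ D ‖v‖²`. Hence `vᵀ M v ≤ ((1 - a) D - a) ‖v‖²`, which
is `≤ 0` as soon as `D / (D + 1) ≤ a ≤ 1`.
-/

open Finset Matrix

def Matrix.IsCondNegSemidef {V R : Type*} [Fintype V] [CommRing R] [PartialOrder R]
    (M : Matrix V V R) : Prop :=
  ∀ v : V → R, ∑ x, v x = 0 → v ⬝ᵥ (M *ᵥ v) ≤ 0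

namespace SimpleGraph

variable {V R : Type*} [Fintype V] [DecidableEq V] (G : SimpleGraph V) [DecidableRel G.Adj]
  [Field R] [LinearOrder R] [IsStrictOrderedRing R]

theorem dotProduct_adjMatrix_mulVec_le_sum_degree (v : V → R) :
    v ⬝ᵥ (G.adjMatrix R *ᵥ v) ≤ ∑ x, G.degree x * v x * v x := by
  have hlap := G.lapMatrix_toLinearMap₂' R v
  rw [toLinearMap₂'_apply', lapMatrix, sub_mulVec, dotProduct_sub,
    dotProduct_mulVec_degMatrix] at hlap
  have : 0 ≤ (∑ i, ∑ j, if G.Adj i j then (v i - v j) ^ 2 else 0) / (2 : R) := by positivity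
  linarith

theorem dotProduct_adjMatrix_mulVec_le_of_degree_le {D : ℕ} (hdeg : ∀ x, G.degree x ≤ D)
    (v : V → R) : v ⬝ᵥ (G.adjMatrix R *ᵥ v) ≤ D * (v ⬝ᵥ v) := by
  refine (G.dotProduct_adjMatrix_mulVec_le_sum_degree v).trans ?_
  rw [dotProduct, mul_sum]
  refine sum_le_sum fun x _ => ?_
  rw [mul_assoc]
  exact mul_le_mul_of_nonneg_right (by exact_mod_cast hdeg x) (mul_self_nonneg (v x))

end SimpleGraph

theorem Matrix.eq_smul_allOnes_sub_smul_one_add_smul_adjMatrix {V R : Type*} [DecidableEq V]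
    [CommRing R] {G : SimpleGraph V} [DecidableRel G.Adj] {a : R} {M : Matrix V V R}
    (hM : ∀ x y, M x y = if x = y then 0 else if G.Adj x y then 1 else a) :
    M = a • Matrix.of (fun _ _ => 1) - a • 1 + (1 - a) • G.adjMatrix R := by
  ext x y
  by_cases h : x = y
  · subst h; simp [hM]
  · by_cases hxy : G.Adj x y <;> simp [hM, h, hxy]

section

variable {V R : Type*} [Fintype V] [DecidableEq V] {G : SimpleGraph V} [DecidableRel G.Adj]

theorem Matrix.dotProduct_mulVec_eq_of_sum_eq_zero [CommRing R] {a : R} {M : Matrix V V R}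
    (hM : ∀ x y, M x y = if x = y then 0 else if G.Adj x y then 1 else a)
    {v : V → R} (hv : ∑ x, v x = 0) :
    v ⬝ᵥ (M *ᵥ v) = (1 - a) * (v ⬝ᵥ (G.adjMatrix R *ᵥ v)) - a * (v ⬝ᵥ v) := by
  have hJ : v ⬝ᵥ (Matrix.of (fun _ _ => (1 : R)) *ᵥ v) = (∑ x, v x) ^ 2 := by
    simp [dotProduct, mulVec, sq, sum_mul]
  rw [eq_smul_allOnes_sub_smul_one_add_smul_adjMatrix hM]
  simp only [add_mulVec, sub_mulVec, smul_mulVec, one_mulVec, dotProduct_add,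
    dotProduct_sub, dotProduct_smul, hJ, hv, smul_eq_mul]
  ring

theorem Matrix.isCondNegSemidef_of_degree_le [Field R] [LinearOrder R] [IsStrictOrderedRing R]
    {D : ℕ} (hdeg : ∀ x, G.degree x ≤ D) {a : R} (ha : a ≤ 1) (hDa : (1 - a) * D ≤ a)
    {M : Matrix V V R} (hM : ∀ x y, M x y = if x = y then 0 else if G.Adj x y then 1 else a) :
    M.IsCondNegSemidef := by
  intro v hv
  rw [dotProduct_mulVec_eq_of_sum_eq_zero hM hv]
  have hA := mul_le_mul_of_nonneg_left (G.dotProduct_adjMatrix_mulVec_le_of_degree_le hdeg v)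
    (sub_nonneg.2 ha)
  have hvv : 0 ≤ v ⬝ᵥ v := sum_nonneg fun x _ => mul_self_nonneg (v x)
  nlinarith

end

theorem uniqueErgodicity.stmt16_general {V : Type*} [Fintype V] [DecidableEq V]
    (G : SimpleGraph V) [DecidableRel G.Adj] (D : ℕ)
    (hdeg : ∀ x : V, G.degree x ≤ D)
    (M : Matrix V V ℝ)
    (hM : ∀ x y : V, M x y =
      if x = y then 0 else if G.Adj x y then 1 else (D : ℝ) / ((D : ℝ) + 1)) :
    ∀ v : V → ℝ, ∑ x, v x = 0 → dotProduct v (M.mulVec v) ≤ 0 := by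
  have hD : (0 : ℝ) < D + 1 := by positivity
  refine Matrix.isCondNegSemidef_of_degree_le hdeg ?_ ?_ hM
  · exact (div_le_one hD).2 (by linarith)
  · rw [one_sub_div hD.ne', add_sub_cancel_left, one_div_mul_eq_div]

/-- For a finite simple graph `G` of maximum degree at most `D` (`D ≥ 1`) and
`a := D/(D+1)`, the matrix with `M x y = 0` for `x = y`, `1` for adjacent pairs
and `a` otherwise is conditionally negative semidefinite. -/
theorem uniqueErgodicity.stmt16 {V : Type*} [Fintype V] [DecidableEq V]
    (G : SimpleGraph V) [DecidableRel G.Adj] (D : ℕ) (hD : 1 ≤ D)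
    (hdeg : ∀ x : V, G.degree x ≤ D)
    (M : Matrix V V ℝ)
    (hM : ∀ x y : V, M x y =
      if x = y then 0 else if G.Adj x y then 1 else (D : ℝ) / ((D : ℝ) + 1)) :
    ∀ v : V → ℝ, ∑ x, v x = 0 → dotProduct v (M.mulVec v) ≤ 0 :=
  uniqueErgodicity.stmt16_general G D hdeg M hM
end

section
/- Let Γ be a Polish group acting continuously on topological spaces X and Y that are Hausdorff and Baire. Assume the action of Γ on X is minimal (every orbit is dense) and that π: X → Y is a continuous surjective Γ-equivariant map. If x_0 ∈ X has comeager orbit Γ·x_0 in X, then π(x_0) has comeager orbit Γ·π(x_0) in Y. -/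
/-!
The orbit map `g ↦ g • π x₀` sends every nonempty open `B ⊆ Γ` to a non-meagre set: countably
many translates of `B • x₀` cover the comeagre orbit of `x₀`, and by minimality preimages under
`π` of meagre sets are meagre. An Effros-type argument shows that a continuous map `f` out of a
Polish space with this property has comeagre range inside the closure of its range: maximal
disjoint families of open pairs `(W, B)` with `W ⊆ closure (f '' B)` and ever smaller `B` refine
one another, and for a point lying in some `W` of every generation the corresponding `B` form a
Cauchy filter base whose limit is mapped to that point. Off the union of the `W` of each
generation only a nowhere dense set of frontier points remains.
-/

open MulAction Set Filter Topology Metric Pointwise TopologicalSpace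

lemma IsOpen.isNowhereDense_frontier {X : Type*} [TopologicalSpace X] {U : Set X}
    (hU : IsOpen U) : IsNowhereDense (frontier U) := by
  rw [isClosed_frontier.isNowhereDense_iff, ← frontier_compl]
  exact interior_frontier hU.isClosed_compl

theorem exists_pairwiseDisjoint_subset_closure_biUnion {α Y : Type*} [TopologicalSpace Y]
    {P : α → Prop} {U : α → Set Y} {V : Set Y}
    (h : ∀ O : Set Y, IsOpen O → (O ∩ V).Nonempty → ∃ a, P a ∧ (U a).Nonempty ∧ U a ⊆ O) :
    ∃ S : Set α, (∀ a ∈ S, P a) ∧ S.PairwiseDisjoint U ∧ V ⊆ closure (⋃ a ∈ S, U a) := by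
  obtain ⟨S, hS⟩ := zorn_subset {S : Set α | (∀ a ∈ S, P a) ∧ S.PairwiseDisjoint U}
    fun c hc hchain => ⟨⋃₀ c, ⟨fun a ⟨s, hs, ha⟩ => (hc hs).1 a ha,
      (hchain.pairwiseDisjoint_sUnion U).2 fun s hs => (hc hs).2⟩,
      fun s hs => subset_sUnion_of_mem hs⟩
  refine ⟨S, hS.prop.1, hS.prop.2, fun y hy => by_contra fun hyS => ?_⟩
  obtain ⟨a, hPa, ⟨z, hz⟩, haO⟩ := h _ isClosed_closure.isOpen_compl ⟨y, hyS, hy⟩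
  have hdisj : ∀ b ∈ S, Disjoint (U a) (U b) := fun b hb =>
    disjoint_compl_left.mono haO ((subset_biUnion_of_mem (u := U) hb).trans subset_closure)
  have haS : a ∈ S := hS.2 ⟨forall_mem_insert.2 ⟨hPa, hS.prop.1⟩,
    hS.prop.2.insert fun b hb _ => hdisj b hb⟩ (subset_insert a S) (mem_insert a S)
  exact haO hz (subset_closure (mem_biUnion haS hz))

theorem mem_range_of_cauchy {Γ Y : Type*} [UniformSpace Γ] [CompleteSpace Γ]
    [TopologicalSpace Y] [T2Space Y] {f : Γ → Y} (hf : Continuous f) {l : Filter Γ}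
    (hl : Cauchy l) {y : Y} (hy : ∀ s ∈ l, y ∈ closure (f '' s)) : y ∈ range f := by
  obtain ⟨g, hg⟩ := CompleteSpace.complete hl
  have hcluster : ClusterPt y (map f l) := clusterPt_iff_forall_mem_closure.2 fun s hs =>
    closure_mono (image_preimage_subset f s) (hy _ hs)
  exact ⟨g, (eq_of_nhds_neBot (hcluster.mono ((map_mono hg).trans hf.continuousAt))).symm⟩

section Orbits

variable {Γ Z Y : Type*} [Group Γ] [TopologicalSpace Γ] [TopologicalSpace Z] [MulAction Γ Z]
  [ContinuousSMul Γ Z] [MulAction Γ Y]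

theorem range_subset_iUnion_inv_smul_image {φ : Z → Y} (hφ : ∀ (g : Γ) (z : Z), φ (g • z) = g • φ z)
    (hmin : ∀ z : Z, Dense (orbit Γ z)) {D : Set Γ} (hD : Dense D) {U : Set Z} (hU : IsOpen U)
    (hne : U.Nonempty) : range φ ⊆ ⋃ d ∈ D, d⁻¹ • φ '' U := by
  rintro _ ⟨z, rfl⟩
  obtain ⟨_, hgU, g, rfl⟩ := (hmin z).inter_open_nonempty U hU hne
  obtain ⟨d, hdD, hdU⟩ :=
    hD.exists_mem_open (hU.preimage (continuous_id.smul continuous_const)) ⟨g, hgU⟩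
  exact mem_iUnion₂.2 ⟨d, hdD, mem_inv_smul_set_iff.2 ⟨d • z, hdU, hφ d z⟩⟩

variable [SeparableSpace Γ] [TopologicalSpace Y] [ContinuousConstSMul Γ Y]

theorem isMeagre_range_of_isMeagre_image {φ : Z → Y}
    (hφ : ∀ (g : Γ) (z : Z), φ (g • z) = g • φ z) (hmin : ∀ z : Z, Dense (orbit Γ z))
    {U : Set Z} (hU : IsOpen U) (hne : U.Nonempty) (h : IsMeagre (φ '' U)) :
    IsMeagre (range φ) := by
  obtain ⟨D, hDc, hD⟩ := exists_countable_dense Γ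
  refine (isMeagre_biUnion hDc fun d _ => ?_).mono
    (range_subset_iUnion_inv_smul_image hφ hmin hD hU hne)
  rw [← preimage_smul]
  exact h.preimage_of_isOpenMap (continuous_const_smul d) (isOpenMap_smul d)

theorem tendsto_residual_of_surjective_equivariant [BaireSpace Y] {π : Z → Y}
    (hπ : ∀ (g : Γ) (z : Z), π (g • z) = g • π z) (hmin : ∀ z : Z, Dense (orbit Γ z))
    (hcont : Continuous π) (hsurj : Function.Surjective π) :
    Tendsto π (residual Z) (residual Y) := by
  refine le_countableGenerate_iff_of_countableInterFilter.2 ?_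
  rintro t ⟨ht, htd⟩
  refine residual_of_dense_open (ht.preimage hcont) (dense_iff_inter_open.2 fun U hU hne => ?_)
  by_contra hdisj
  have hmeagre : IsMeagre (π '' U) := by
    have hsub : π '' U ⊆ tᶜ := image_subset_iff.2 fun z hz hzt => hdisj ⟨z, hz, hzt⟩
    have ht_compl : IsMeagre tᶜ := by
      rw [IsMeagre, compl_compl]
      exact residual_of_dense_open ht htd
    exact ht_compl.mono hsub
  have : Nonempty Y := ⟨π hne.some⟩
  have hunivY := isMeagre_range_of_isMeagre_image hπ hmin hU hne hmeagre
  rw [hsurj.range_eq] at hunivY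
  exact not_isMeagre_of_isOpen isOpen_univ univ_nonempty hunivY

end Orbits

section Effros

variable {Γ Y : Type*} [TopologicalSpace Y] {f : Γ → Y} {V : Set Y}

structure IsApproxFamily [TopologicalSpace Γ] (f : Γ → Y) (V : Set Y)
    (F : Set (Set Y × Set Γ)) : Prop where
  isOpen_fst : ∀ p ∈ F, IsOpen p.1
  isOpen_snd : ∀ p ∈ F, IsOpen p.2
  fst_subset_closure_image : ∀ p ∈ F, p.1 ⊆ closure (f '' p.2)
  pairwiseDisjoint : F.PairwiseDisjoint Prod.fst
  subset_closure_biUnion : V ⊆ closure (⋃ p ∈ F, p.1)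

variable [PseudoMetricSpace Γ]

theorem exists_subset_closure_image_ball [SeparableSpace Γ] (hf : Continuous f)
    (hB : ∀ B : Set Γ, IsOpen B → B.Nonempty → ¬IsMeagre (f '' B)) {B : Set Γ} (hBo : IsOpen B)
    {W : Set Y} (hW : IsOpen W) (hne : (f '' B ∩ W).Nonempty) {ε : ℝ} (hε : 0 < ε) :
    ∃ W' B', IsOpen W' ∧ W'.Nonempty ∧ W' ⊆ W ∧ IsOpen B' ∧ B' ⊆ B ∧ (∃ c, B' ⊆ ball c ε) ∧
      W' ⊆ closure (f '' B') := by
  obtain ⟨D, hDc, hD⟩ := exists_countable_dense Γ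
  set B₀ := B ∩ f ⁻¹' W
  have hB₀ : IsOpen B₀ := hBo.inter (hW.preimage hf)
  have hcover : f '' B₀ = ⋃ d ∈ D, f '' (B₀ ∩ ball d ε) := by
    rw [← image_iUnion₂, ← inter_iUnion₂, (dense_iff_iUnion_ball D).1 hD ε hε, inter_univ]
  obtain ⟨_, ⟨g, hgB, rfl⟩, hgW⟩ := hne
  obtain ⟨d, -, hd⟩ := exists_of_not_isMeagre_biUnion hDc (hcover ▸ hB B₀ hB₀ ⟨g, hgB, hgW⟩)
  set B' := B₀ ∩ ball d ε
  obtain ⟨z, hz⟩ : (interior (closure (f '' B'))).Nonempty :=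
    nonempty_iff_ne_empty.2 fun h => hd (IsNowhereDense.isMeagre h)
  obtain ⟨_, hxS, x, hx, rfl⟩ := mem_closure_iff.1 (interior_subset hz) _ isOpen_interior hz
  exact ⟨interior (closure (f '' B')) ∩ W, B', isOpen_interior.inter hW, ⟨f x, hxS, hx.1.2⟩,
    inter_subset_right, hB₀.inter isOpen_ball, inter_subset_left.trans inter_subset_left,
    ⟨d, inter_subset_right⟩, inter_subset_left.trans interior_subset⟩

theorem IsApproxFamily.exists_refinement [SeparableSpace Γ] (hf : Continuous f)
    (hB : ∀ B : Set Γ, IsOpen B → B.Nonempty → ¬IsMeagre (f '' B)) {F : Set (Set Y × Set Γ)}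
    (hF : IsApproxFamily f V F) {ε : ℝ} (hε : 0 < ε) :
    ∃ F', IsApproxFamily f V F' ∧
      ∀ p ∈ F', (∃ c, p.2 ⊆ ball c ε) ∧ ∃ q ∈ F, p.1 ⊆ q.1 ∧ p.2 ⊆ q.2 := by
  obtain ⟨F', hP, hdisj, hdense⟩ := exists_pairwiseDisjoint_subset_closure_biUnion (U := Prod.fst)
    (P := fun p : Set Y × Set Γ => IsOpen p.1 ∧ IsOpen p.2 ∧ p.1 ⊆ closure (f '' p.2) ∧
      (∃ c, p.2 ⊆ ball c ε) ∧ ∃ q ∈ F, p.1 ⊆ q.1 ∧ p.2 ⊆ q.2) (V := V) fun O hO ⟨z, hzO, hzV⟩ => by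
    obtain ⟨w, hwO, hw⟩ := mem_closure_iff.1 (hF.subset_closure_biUnion hzV) O hO hzO
    obtain ⟨q, hq, hwq⟩ := mem_iUnion₂.1 hw
    have hOq : IsOpen (O ∩ q.1) := hO.inter (hF.isOpen_fst q hq)
    have hne : (f '' q.2 ∩ (O ∩ q.1)).Nonempty := inter_comm _ (O ∩ q.1) ▸
      mem_closure_iff.1 (hF.fst_subset_closure_image q hq hwq) _ hOq ⟨hwO, hwq⟩
    obtain ⟨W', B', hW'o, hW'ne, hW'sub, hB'o, hB'sub, hsmall, hW'cl⟩ :=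
      exists_subset_closure_image_ball hf hB (hF.isOpen_snd q hq) hOq hne hε
    exact ⟨(W', B'), ⟨hW'o, hB'o, hW'cl, hsmall, q, hq, hW'sub.trans inter_subset_right, hB'sub⟩,
      hW'ne, hW'sub.trans inter_subset_left⟩
  exact ⟨F', ⟨fun p hp => (hP p hp).1, fun p hp => (hP p hp).2.1, fun p hp => (hP p hp).2.2.1,
    hdisj, hdense⟩, fun p hp => (hP p hp).2.2.2⟩

theorem mem_range_of_forall_exists_mem_fst [CompleteSpace Γ] [T2Space Y] (hf : Continuous f)
    {F : ℕ → Set (Set Y × Set Γ)} (hF : ∀ n, IsApproxFamily f V (F n))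
    (hrefine : ∀ n, ∀ p ∈ F (n + 1), (∃ c, p.2 ⊆ ball c (1 / ((n : ℝ) + 1))) ∧
      ∃ q ∈ F n, p.1 ⊆ q.1 ∧ p.2 ⊆ q.2)
    {y : Y} (hy : ∀ n, ∃ p ∈ F n, y ∈ p.1) : y ∈ range f := by
  choose p hpF hyp using hy
  have hparent : ∀ n, (p (n + 1)).2 ⊆ (p n).2 := fun n => by
    obtain ⟨-, q, hq, hsub₁, hsub₂⟩ := hrefine n _ (hpF (n + 1))
    rwa [(hF n).pairwiseDisjoint.elim hq (hpF n)
      (not_disjoint_iff.2 ⟨y, hsub₁ (hyp (n + 1)), hyp n⟩)] at hsub₂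
  have hy_closure : ∀ n, y ∈ closure (f '' (p n).2) := fun n =>
    (hF n).fst_subset_closure_image _ (hpF n) (hyp n)
  have hbasis := hasBasis_iInf_principal
    (antitone_nat_of_succ_le (f := fun n => (p n).2) hparent).directed_ge
  have hcauchy : Cauchy (⨅ n, 𝓟 (p n).2) := by
    refine Metric.cauchy_iff.2 ⟨hbasis.neBot_iff.2 fun {n} _ =>
      (closure_nonempty_iff.1 ⟨y, hy_closure n⟩).of_image, fun ε hε => ?_⟩
    obtain ⟨n, hn⟩ := exists_nat_one_div_lt (half_pos hε)
    obtain ⟨c, hc⟩ := (hrefine n _ (hpF (n + 1))).1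
    refine ⟨(p (n + 1)).2, hbasis.mem_of_mem trivial, fun x hx x' hx' => ?_⟩
    calc dist x x' ≤ dist x c + dist x' c := dist_triangle_right x x' c
      _ < ε := by linarith [mem_ball.1 (hc hx), mem_ball.1 (hc hx')]
  refine mem_range_of_cauchy hf hcauchy fun s hs => ?_
  obtain ⟨n, -, hn⟩ := hbasis.mem_iff.1 hs
  exact closure_mono (image_mono hn) (hy_closure n)

end Effros

theorem isMeagre_diff_range_of_subset_closure {Γ Y : Type*} [TopologicalSpace Γ] [PolishSpace Γ]
    [TopologicalSpace Y] [T2Space Y] {f : Γ → Y} (hf : Continuous f)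
    (hB : ∀ B : Set Γ, IsOpen B → B.Nonempty → ¬IsMeagre (f '' B)) {V : Set Y} (hV : IsOpen V)
    (hVf : V ⊆ closure (range f)) : IsMeagre (V \ range f) := by
  let _ : UpgradedIsCompletelyMetrizableSpace Γ := upgradeIsCompletelyMetrizable Γ
  have h₀ : IsApproxFamily f V {(V, univ)} :=
    ⟨by simpa using hV, by simp, by simpa using hVf, pairwiseDisjoint_singleton _ _,
      by simpa using subset_closure⟩
  choose next hnext using fun (n : ℕ) (F : {F // IsApproxFamily f V F}) =>
    F.2.exists_refinement hf hB (Nat.one_div_pos_of_nat (α := ℝ) (n := n))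
  let F : ℕ → {F // IsApproxFamily f V F} := fun n =>
    Nat.rec ⟨_, h₀⟩ (fun n F => ⟨next n F, (hnext n F).1⟩) n
  let U : ℕ → Set Y := fun n => ⋃ p ∈ (F n).1, p.1
  have hU : ∀ n, IsOpen (U n) := fun n => isOpen_biUnion (F n).2.isOpen_fst
  refine (isMeagre_iUnion fun n => (hU n).isNowhereDense_frontier.isMeagre).mono ?_
  rintro y ⟨hyV, hyf⟩
  obtain ⟨n, hn⟩ : ∃ n, y ∉ U n := by
    by_contra! hy
    exact hyf (mem_range_of_forall_exists_mem_fst hf (fun n => (F n).2)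
      (fun n => (hnext n (F n)).2) fun n => by simpa [U] using hy n)
  refine mem_iUnion.2 ⟨n, ?_⟩
  rw [(hU n).frontier_eq]
  exact ⟨(F n).2.subset_closure_biUnion hyV, hn⟩

theorem range_mem_residual_of_denseRange {Γ Y : Type*} [TopologicalSpace Γ] [PolishSpace Γ]
    [TopologicalSpace Y] [T2Space Y] {f : Γ → Y} (hf : Continuous f)
    (hB : ∀ B : Set Γ, IsOpen B → B.Nonempty → ¬IsMeagre (f '' B)) (hd : DenseRange f) :
    range f ∈ residual Y := by
  have h := isMeagre_diff_range_of_subset_closure hf hB isOpen_univ hd.closure_range.ge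
  rwa [IsMeagre, ← compl_eq_univ_sdiff, compl_compl] at h

theorem uniqueErgodicity.stmt17_general
    (Γ : Type*) [Group Γ] [TopologicalSpace Γ] [IsTopologicalGroup Γ] [PolishSpace Γ]
    (X Y : Type*) [TopologicalSpace X] [TopologicalSpace Y]
    [T2Space Y] [BaireSpace X] [BaireSpace Y]
    [MulAction Γ X] [MulAction Γ Y] [ContinuousSMul Γ X] [ContinuousSMul Γ Y]
    (hmin : ∀ x : X, Dense (orbit Γ x))
    (π : X → Y) (hcont : Continuous π) (hsurj : Function.Surjective π)
    (hequiv : ∀ (g : Γ) (x : X), π (g • x) = g • π x)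
    (x₀ : X) (hx₀ : orbit Γ x₀ ∈ residual X) :
    orbit Γ (π x₀) ∈ residual Y := by
  have : Nonempty X := ⟨x₀⟩
  have hX : ∀ B : Set Γ, IsOpen B → B.Nonempty → ¬IsMeagre ((· • x₀) '' B) :=
    fun B hB hne h => not_isMeagre_of_mem_residual hx₀ <|
      isMeagre_range_of_isMeagre_image (fun g h => smul_assoc g h x₀)
        (fun g => by rw [orbit_eq_univ Γ g]; exact dense_univ) hB hne h
  have hπ_orbit : π '' orbit Γ x₀ ⊆ orbit Γ (π x₀) := by
    rintro _ ⟨_, ⟨g, rfl⟩, rfl⟩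
    exact ⟨g, (hequiv g x₀).symm⟩
  have hY : ∀ B : Set Γ, IsOpen B → B.Nonempty → ¬IsMeagre ((· • π x₀) '' B) :=
    fun B hB hne h => by
      have hpre : IsMeagre (π ⁻¹' ((· • π x₀) '' B)) :=
        tendsto_residual_of_surjective_equivariant hequiv hmin hcont hsurj h
      refine hX B hB hne (hpre.mono ?_)
      rintro _ ⟨g, hg, rfl⟩
      exact ⟨g, hg, (hequiv g x₀).symm⟩
  exact range_mem_residual_of_denseRange (continuous_id.smul continuous_const) hY
    ((hsurj.denseRange.dense_image hcont (hmin x₀)).mono hπ_orbit)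

/-- If a Polish group `Γ` acts continuously and minimally on a Hausdorff Baire
space `X`, acts continuously on a Hausdorff Baire space `Y`, and `π : X → Y` is a
continuous surjective `Γ`-map, then the image under `π` of a point with comeager
orbit has comeager orbit. -/
theorem uniqueErgodicity.stmt17
    (Γ : Type*) [Group Γ] [TopologicalSpace Γ] [IsTopologicalGroup Γ] [PolishSpace Γ]
    (X Y : Type*) [TopologicalSpace X] [TopologicalSpace Y]
    [T2Space X] [T2Space Y] [BaireSpace X] [BaireSpace Y]
    [MulAction Γ X] [MulAction Γ Y] [ContinuousSMul Γ X] [ContinuousSMul Γ Y]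
    (hmin : ∀ x : X, Dense (orbit Γ x))
    (π : X → Y) (hcont : Continuous π) (hsurj : Function.Surjective π)
    (hequiv : ∀ (g : Γ) (x : X), π (g • x) = g • π x)
    (x₀ : X) (hx₀ : orbit Γ x₀ ∈ residual X) :
    orbit Γ (π x₀) ∈ residual Y :=
  uniqueErgodicity.stmt17_general Γ X Y hmin π hcont hsurj hequiv x₀ hx₀
end
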